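/- arXiv:1105.2238 — 4 statements merged into one kernel-verified Lean document; each statement's English description precedes it below -/
import Mathlib

section
/- Let p be a prime and m ≥ 1. The number of Lagrangian subspaces (m-dimensional totally isotropic subspaces) of the symplectic space ((ZMod p)^{2m}, φ_{2m}) is exactly ∏_{i=1}^{m} (p^i + 1). -/
def triForm (p N : ℕ) (x y : Fin N → ZMod p) : ZMod p :=
  ∑ i : Fin N, ∑ j : Fin N,
    (if (j : ℕ) = (i : ℕ) + 1 then (1 : ZMod p)
     else if (i : ℕ) = (j : ℕ) + 1 then -1 else 0) * x i * y j

namespace Lagr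

open Module Submodule LinearMap

variable {p : ℕ}

/-- the coefficient -/
def c (p N : ℕ) (i j : Fin N) : ZMod p :=
  if (j : ℕ) = (i : ℕ) + 1 then (1 : ZMod p)
  else if (i : ℕ) = (j : ℕ) + 1 then -1 else 0

lemma c_anti (p N : ℕ) (i j : Fin N) : c p N j i = - c p N i j := by
  unfold c
  split_ifs
  all_goals try (exfalso; omega)
  all_goals ring

noncomputable def B (p N : ℕ) : LinearMap.BilinForm (ZMod p) (Fin N → ZMod p) :=
  LinearMap.mk₂ (ZMod p) (triForm p N)
    (fun x x' y => by
      unfold triForm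
      rw [← Finset.sum_add_distrib]
      refine Finset.sum_congr rfl fun i _ => ?_
      rw [← Finset.sum_add_distrib]
      refine Finset.sum_congr rfl fun j _ => ?_
      simp only [Pi.add_apply]; split_ifs <;> ring)
    (fun a x y => by
      unfold triForm
      rw [smul_eq_mul, Finset.mul_sum]
      refine Finset.sum_congr rfl fun i _ => ?_
      rw [Finset.mul_sum]
      refine Finset.sum_congr rfl fun j _ => ?_
      simp only [Pi.smul_apply, smul_eq_mul]; ring)
    (fun x y y' => by
      unfold triForm
      rw [← Finset.sum_add_distrib]
      refine Finset.sum_congr rfl fun i _ => ?_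
      rw [← Finset.sum_add_distrib]
      refine Finset.sum_congr rfl fun j _ => ?_
      simp only [Pi.add_apply]; split_ifs <;> ring)
    (fun a x y => by
      unfold triForm
      rw [smul_eq_mul, Finset.mul_sum]
      refine Finset.sum_congr rfl fun i _ => ?_
      rw [Finset.mul_sum]
      refine Finset.sum_congr rfl fun j _ => ?_
      simp only [Pi.smul_apply, smul_eq_mul]; ring)

@[simp] lemma B_apply (p N : ℕ) (x y : Fin N → ZMod p) :
    B p N x y = triForm p N x y := rfl

lemma triForm_eq_sum_c (p N : ℕ) (x y : Fin N → ZMod p) :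
    triForm p N x y = ∑ i : Fin N, ∑ j : Fin N, c p N i j * x i * y j := rfl

lemma B_skew (p N : ℕ) (x y : Fin N → ZMod p) :
    B p N y x = - B p N x y := by
  simp only [B_apply, triForm_eq_sum_c]
  rw [Finset.sum_comm, ← Finset.sum_neg_distrib]
  refine Finset.sum_congr rfl fun i _ => ?_
  rw [← Finset.sum_neg_distrib]
  refine Finset.sum_congr rfl fun j _ => ?_
  rw [c_anti]; ring

lemma B_refl (p N : ℕ) : (B p N).IsRefl := by
  intro x y h
  rw [B_skew, h, neg_zero]

lemma c_diag (p N : ℕ) (i : Fin N) : c p N i i = 0 := by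
  unfold c
  rw [if_neg (by omega), if_neg (by omega)]

lemma B_alt (p N : ℕ) (x : Fin N → ZMod p) : B p N x x = 0 := by
  simp only [B_apply, triForm_eq_sum_c]
  rw [← Finset.sum_product']
  refine Finset.sum_ninvolution (fun a => (a.2, a.1)) ?_ ?_
    (fun a => Finset.mem_univ _) (fun a => rfl)
  · intro a
    simp only
    rw [c_anti]; ring
  · intro a h heq
    apply h
    have h2 : a.2 = a.1 := congrArg Prod.fst heq
    rw [h2, c_diag]
    ring

end Lagr

namespace Lagr

open Module Submodule

lemma sum_indicator (p N a : ℕ) (x : Fin N → ZMod p) :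
    ∑ i : Fin N, (if (i : ℕ) = a then x i else 0)
      = if h : a < N then x ⟨a, h⟩ else 0 := by
  split_ifs with h
  · rw [Finset.sum_eq_single ⟨a, h⟩]
    · simp
    · intro i _ hne
      rw [if_neg]
      intro hc; exact hne (Fin.ext hc)
    · intro hc; exact absurd (Finset.mem_univ _) hc
  · apply Finset.sum_eq_zero
    intro i _
    rw [if_neg]
    have := i.isLt; omega

lemma key_eq (p N : ℕ) (x : Fin N → ZMod p) (j : Fin N) :
    ∑ i : Fin N, c p N i j * x i
      = (if h : 1 ≤ (j : ℕ) then x ⟨(j : ℕ) - 1, by have := j.isLt; omega⟩ else 0)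
        - (if h : (j : ℕ) + 1 < N then x ⟨(j : ℕ) + 1, h⟩ else 0) := by
  have hpt : ∀ i : Fin N, c p N i j * x i
      = (if (i : ℕ) + 1 = (j : ℕ) then x i else 0)
        - (if (i : ℕ) = (j : ℕ) + 1 then x i else 0) := by
    intro i
    unfold c
    split_ifs
    all_goals try (exfalso; omega)
    all_goals ring
  rw [Finset.sum_congr rfl fun i _ => hpt i, Finset.sum_sub_distrib]
  congr 1
  · by_cases hj : 1 ≤ (j : ℕ)
    · rw [dif_pos hj]
      have : ∀ i : Fin N, (if (i : ℕ) + 1 = (j : ℕ) then x i else 0)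
          = (if (i : ℕ) = (j : ℕ) - 1 then x i else 0) := by
        intro i
        refine if_congr ?_ rfl rfl
        omega
      rw [Finset.sum_congr rfl fun i _ => this i, sum_indicator,
        dif_pos (by have := j.isLt; omega : (j : ℕ) - 1 < N)]
    · rw [dif_neg hj]
      apply Finset.sum_eq_zero
      intro i _
      rw [if_neg]
      omega
  · rw [sum_indicator]

lemma B_apply_single (p N : ℕ) (x : Fin N → ZMod p) (j : Fin N) :
    B p N x (Pi.single j 1) = ∑ i : Fin N, c p N i j * x i := by
  simp only [B_apply, triForm_eq_sum_c]
  refine Finset.sum_congr rfl fun i _ => ?_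
  rw [Finset.sum_eq_single j]
  · simp
  · intro j' _ hne
    rw [Pi.single_eq_of_ne hne, mul_zero]
  · intro hc; exact absurd (Finset.mem_univ _) hc

lemma B_nondeg_even (p N : ℕ) (hN2 : 2 ≤ N) (hNe : N % 2 = 0) :
    (B p N).Nondegenerate := by
  refine (LinearMap.IsRefl.nondegenerate_iff_separatingLeft (B_refl p N)).mpr ?_
  intro x hx
  have E : ∀ (j : ℕ) (hj : j < N),
      (if h : 1 ≤ j then x ⟨j - 1, by omega⟩ else 0)
        - (if h : j + 1 < N then x ⟨j + 1, h⟩ else 0) = 0 := by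
    intro j hj
    have h1 := hx (Pi.single (⟨j, hj⟩ : Fin N) 1)
    rw [B_apply_single, key_eq] at h1
    exact h1
  have step : ∀ a : ℕ, (h : a + 2 < N) → x ⟨a, by omega⟩ = x ⟨a + 2, h⟩ := by
    intro a h
    have h1 := E (a + 1) (by omega)
    rw [dif_pos (by omega), dif_pos (by omega)] at h1
    rw [sub_eq_zero] at h1
    exact h1
  have odd1 : x ⟨1, by omega⟩ = 0 := by
    have h1 := E 0 (by omega)
    rw [dif_neg (by omega), dif_pos (by omega), zero_sub, neg_eq_zero] at h1
    exact h1
  have evtop : x ⟨N - 2, by omega⟩ = 0 := by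
    have h1 := E (N - 1) (by omega)
    rw [dif_pos (by omega), dif_neg (by omega), sub_zero] at h1
    rw [show (⟨N - 2, by omega⟩ : Fin N) = ⟨N - 1 - 1, by omega⟩ from Fin.mk_eq_mk.mpr (by omega)]
    exact h1
  have oddall : ∀ k : ℕ, (h : 2 * k + 1 < N) → x ⟨2 * k + 1, h⟩ = 0 := by
    intro k
    induction k with
    | zero => intro h; exact odd1
    | succ n ih =>
      intro h
      have h2 : 2 * n + 1 + 2 < N := by omega
      have h3 := step (2 * n + 1) h2
      rw [ih (by omega)] at h3
      rw [show (⟨2 * (n + 1) + 1, h⟩ : Fin N) = ⟨2 * n + 1 + 2, h2⟩ from Fin.mk_eq_mk.mpr (by omega)]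
      exact h3.symm
  have evall : ∀ t k : ℕ, ∀ _h : 2 * k + 2 * t + 2 = N, x ⟨2 * k, by omega⟩ = 0 := by
    intro t
    induction t with
    | zero =>
      intro k hk
      rw [show (⟨2 * k, by omega⟩ : Fin N) = ⟨N - 2, by omega⟩ from Fin.mk_eq_mk.mpr (by omega)]
      exact evtop
    | succ n ih =>
      intro k hk
      have h2 : 2 * k + 2 < N := by omega
      rw [step (2 * k) h2]
      have h3 := ih (k + 1) (by omega)
      rw [show (⟨2 * k + 2, h2⟩ : Fin N) = ⟨2 * (k + 1), by omega⟩ from Fin.mk_eq_mk.mpr (by omega)]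
      exact h3
  funext i
  show x i = 0
  rcases Nat.even_or_odd (i : ℕ) with ⟨k, hk⟩ | ⟨k, hk⟩
  · have h4 := evall ((N - 2 * k - 2) / 2) k (by have := i.isLt; omega)
    rw [show i = ⟨2 * k, by have := i.isLt; omega⟩ from Fin.ext (show (i : ℕ) = 2 * k by omega)]
    exact h4
  · have h4 := oddall k (by have := i.isLt; omega)
    rw [show i = ⟨2 * k + 1, by have := i.isLt; omega⟩ from Fin.ext (show (i : ℕ) = 2 * k + 1 by omega)]
    exact h4

end Lagr

namespace Lagr

section Counting

open Module Submodule LinearMap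

variable {p : ℕ} [Fact p.Prime] {V : Type*} [AddCommGroup V] [Module (ZMod p) V]
  [Module.Finite (ZMod p) V]

lemma card_submodule (U : Submodule (ZMod p) V) :
    Nat.card U = p ^ finrank (ZMod p) U := by
  have : Finite V := Module.finite_of_finite (ZMod p)
  have : Fintype U := Fintype.ofFinite _
  rw [Nat.card_eq_fintype_card, card_eq_pow_finrank (K := ZMod p), ZMod.card]

lemma span_isotropic (Bf : LinearMap.BilinForm (ZMod p) V) (s : Set V)
    (hs : ∀ x ∈ s, ∀ y ∈ s, Bf x y = 0) :
    ∀ x ∈ span (ZMod p) s, ∀ y ∈ span (ZMod p) s, Bf x y = 0 := by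
  have h1 : ∀ x ∈ s, ∀ y ∈ span (ZMod p) s, Bf x y = 0 := by
    intro x hx y hy
    have : span (ZMod p) s ≤ ker (Bf x) := span_le.mpr fun z hz => hs x hx z hz
    exact this hy
  intro x hx y hy
  have : span (ZMod p) s ≤ ker (Bf.flip y) := span_le.mpr fun z hz => h1 z hz y hy
  exact this hx

lemma count_tuples (Bf : LinearMap.BilinForm (ZMod p) V) (halt : Bf.IsAlt)
    (d : ℕ → ℕ) (k : ℕ)
    (hd : ∀ j, j < k → ∀ U : Submodule (ZMod p) V, (∀ x ∈ U, ∀ y ∈ U, Bf x y = 0) →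
      finrank (ZMod p) U = j → finrank (ZMod p) (Bf.orthogonal U) = d j) :
    Nat.card {f : Fin k → V //
        LinearIndependent (ZMod p) f ∧ ∀ i j, Bf (f i) (f j) = 0}
      = ∏ j ∈ Finset.range k, (p ^ d j - p ^ j) := by
  have hfinV : Finite V := Module.finite_of_finite (ZMod p)
  induction k with
  | zero =>
    haveI : Unique {f : Fin 0 → V //
        LinearIndependent (ZMod p) f ∧ ∀ i j, Bf (f i) (f j) = 0} :=
      { default := ⟨fun i => i.elim0, linearIndependent_empty_type, fun i => i.elim0⟩
        uniq := fun f => Subtype.ext (funext fun i => i.elim0) }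
    simp only [Finset.range_zero, Finset.prod_empty]
    exact Nat.card_unique
  | succ k ih =>
    classical
    have hrefl : Bf.IsRefl := halt.isRefl
    set T := {f : Fin k → V // LinearIndependent (ZMod p) f ∧ ∀ i j, Bf (f i) (f j) = 0}
      with hT
    have e : {f : Fin (k + 1) → V //
          LinearIndependent (ZMod p) f ∧ ∀ i j, Bf (f i) (f j) = 0}
        ≃ Σ g : T, {v : V // v ∈ Bf.orthogonal (span (ZMod p) (Set.range g.1)) ∧
            v ∉ span (ZMod p) (Set.range g.1)} :=
      { toFun := fun f =>
          ⟨⟨Fin.tail f.1, (linearIndependent_fin_succ.mp f.2.1).1,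
              fun i j => f.2.2 i.succ j.succ⟩,
            ⟨f.1 0, by
              apply LinearMap.BilinForm.mem_orthogonal_iff.mpr
              intro n hn
              show Bf n (f.1 0) = 0
              have hiso := span_isotropic Bf (Set.range f.1)
                (by rintro x ⟨i, rfl⟩ y ⟨j, rfl⟩; exact f.2.2 i j)
              exact hiso n
                (span_mono (by rintro z ⟨i, rfl⟩; exact ⟨i.succ, rfl⟩) hn)
                (f.1 0) (subset_span ⟨0, rfl⟩),
              (linearIndependent_fin_succ.mp f.2.1).2⟩⟩
        invFun := fun gv =>
          ⟨Fin.cons gv.2.1 gv.1.1, by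
            constructor
            · exact linearIndependent_fin_cons.mpr ⟨gv.1.2.1, gv.2.2.2⟩
            · obtain ⟨⟨g, hg1, hg2⟩, ⟨v, hv1, hv2⟩⟩ := gv
              have hvg : ∀ i, Bf (g i) v = 0 := fun i =>
                (LinearMap.BilinForm.mem_orthogonal_iff.mp hv1) _ (subset_span ⟨i, rfl⟩)
              have hgv : ∀ i, Bf v (g i) = 0 := fun i => hrefl _ _ (hvg i)
              intro i j
              refine Fin.cases ?_ (fun i' => ?_) i
              · refine Fin.cases ?_ (fun j' => ?_) j
                · simpa using halt v
                · simpa using hgv j'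
              · refine Fin.cases ?_ (fun j' => ?_) j
                · simpa using hvg i'
                · simpa using hg2 i' j'⟩
        left_inv := fun f => Subtype.ext (Fin.cons_self_tail f.1)
        right_inv := fun gv => rfl }
    rw [Nat.card_congr e]
    letI : Fintype T := Fintype.ofFinite _
    letI : ∀ g : T, Fintype {v : V // v ∈ Bf.orthogonal (span (ZMod p) (Set.range g.1)) ∧
        v ∉ span (ZMod p) (Set.range g.1)} := fun g => Fintype.ofFinite _
    have hcard : ∀ g : T,
        Fintype.card {v : V // v ∈ Bf.orthogonal (span (ZMod p) (Set.range g.1)) ∧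
          v ∉ span (ZMod p) (Set.range g.1)} = p ^ d k - p ^ k := by
      intro g
      set W := span (ZMod p) (Set.range g.1) with hW
      set O := Bf.orthogonal W with hO
      have hWfr : finrank (ZMod p) W = k := by
        rw [hW, finrank_span_eq_card g.2.1, Fintype.card_fin]
      have hWiso : ∀ x ∈ W, ∀ y ∈ W, Bf x y = 0 :=
        span_isotropic Bf _ (by rintro x ⟨i, rfl⟩ y ⟨j, rfl⟩; exact g.2.2 i j)
      have hOfr : finrank (ZMod p) O = d k := hd k (lt_add_one k) W hWiso hWfr
      have hWO : (W : Set V) ⊆ (O : Set V) := fun w hw =>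
        LinearMap.BilinForm.mem_orthogonal_iff.mpr fun n hn => hWiso n hn w hw
      have e2 : {v : V // v ∈ O ∧ v ∉ W} ≃ ↥((O : Set V) \ (W : Set V)) :=
        Equiv.subtypeEquivRight (by intro v; simp [Set.mem_diff])
      rw [← Nat.card_eq_fintype_card, Nat.card_congr e2, Nat.card_coe_set_eq,
        Set.ncard_diff hWO, ← Nat.card_coe_set_eq, ← Nat.card_coe_set_eq]
      have c1 : Nat.card ↥(O : Set V) = p ^ d k := by
        rw [show Nat.card ↥(O : Set V) = Nat.card O from rfl, card_submodule, hOfr]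
      have c2 : Nat.card ↥(W : Set V) = p ^ k := by
        rw [show Nat.card ↥(W : Set V) = Nat.card W from rfl, card_submodule, hWfr]
      rw [c1, c2]
    rw [Nat.card_eq_fintype_card, Fintype.card_sigma,
      Finset.sum_congr rfl fun g _ => hcard g, Finset.sum_const, smul_eq_mul,
      Finset.prod_range_succ, ← ih (fun j hj => hd j (by omega)), Nat.card_eq_fintype_card,
      Finset.card_univ]

lemma count_indep (n k : ℕ) (hfr : finrank (ZMod p) V = n) :
    Nat.card {f : Fin k → V // LinearIndependent (ZMod p) f}
      = ∏ j ∈ Finset.range k, (p ^ n - p ^ j) := by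
  have h0 : ((0 : LinearMap.BilinForm (ZMod p) V)).IsAlt := fun v => rfl
  have h := count_tuples (0 : LinearMap.BilinForm (ZMod p) V) h0 (fun _ => n) k ?_
  · rw [← h]
    apply Nat.card_congr
    exact Equiv.subtypeEquivRight (by intro f; simp)
  · intro j hj U hU hfrU
    have : (0 : LinearMap.BilinForm (ZMod p) V).orthogonal U = ⊤ := by
      ext v
      simp only [Submodule.mem_top, iff_true]
      exact LinearMap.BilinForm.mem_orthogonal_iff.mpr fun n hn => rfl
    rw [this, finrank_top, hfr]

end Counting

section Arith

lemma term_id {p : ℕ} (hp : 1 < p) {j m : ℕ} (hj : j < m) :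
    p ^ (2 * m - j) - p ^ j = (p ^ (m - j) + 1) * (p ^ m - p ^ j) := by
  set q := p ^ j with hq
  set a := p ^ (m - j) with ha
  have ha1 : 1 ≤ a := Nat.one_le_pow _ _ (by omega)
  obtain ⟨b, hb⟩ : ∃ b, a = b + 1 := ⟨a - 1, by omega⟩
  have hm : p ^ m = q * a := by rw [hq, ha, ← pow_add]; congr 1; omega
  have h2m : p ^ (2 * m - j) = q * (a * a) := by
    rw [hq, ha, ← pow_add, ← pow_add]; congr 1; omega
  rw [hm, h2m, hb]
  have h1 : q * (b + 1) - q = q * b := by rw [Nat.mul_succ, Nat.add_sub_cancel]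
  have h2 : q * ((b + 1) * (b + 1)) - q = q * (b * b + 2 * b) := by
    have hbb : (b + 1) * (b + 1) = (b * b + 2 * b) + 1 := by ring
    rw [hbb, Nat.mul_add, Nat.mul_one, Nat.add_sub_cancel]
  rw [h1, h2]
  ring

end Arith

end Lagr

open Module Submodule in
/-- For a prime `p` and `m ≥ 1`, the number of Lagrangian subspaces
(`m`-dimensional totally isotropic subspaces) of the symplectic space
`((ZMod p)^{2m}, φ_{2m})` is exactly `∏_{i=1}^{m} (p^i + 1)`. -/
theorem card_lagrangians (p m : ℕ) (hp : p.Prime) (hm : 1 ≤ m) :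
    Nat.card {W : Submodule (ZMod p) (Fin (2*m) → ZMod p) //
        (∀ x ∈ W, ∀ y ∈ W, triForm p (2*m) x y = 0) ∧
        Module.finrank (ZMod p) W = m}
      = ∏ i ∈ Finset.range m, (p ^ (i + 1) + 1) := by
  haveI : Fact p.Prime := ⟨hp⟩
  classical
  have hfinV : Finite (Fin (2*m) → ZMod p) := by infer_instance
  have halt : (Lagr.B p (2*m)).IsAlt := Lagr.B_alt p (2*m)
  have hrefl : (Lagr.B p (2*m)).IsRefl := halt.isRefl
  have hnd : (Lagr.B p (2*m)).Nondegenerate :=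
    Lagr.B_nondeg_even p (2*m) (by omega) (by omega)
  -- Step 1 : count isotropic independent m-tuples
  have claim1 : Nat.card {f : Fin m → (Fin (2*m) → ZMod p) //
        LinearIndependent (ZMod p) f ∧ ∀ i j, Lagr.B p (2*m) (f i) (f j) = 0}
      = ∏ j ∈ Finset.range m, (p ^ (2*m - j) - p ^ j) := by
    refine Lagr.count_tuples (Lagr.B p (2*m)) halt (fun j => 2*m - j) m ?_
    intro j hj U hU hfrU
    rw [LinearMap.BilinForm.finrank_orthogonal hnd U, hfrU,
      Module.finrank_fin_fun]
  -- Step 2 : fibration over lagrangians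
  haveI : Finite (Submodule (ZMod p) (Fin (2*m) → ZMod p)) :=
    Finite.of_injective _ (SetLike.coe_injective (A := Submodule (ZMod p) (Fin (2*m) → ZMod p)))
  set L := {W : Submodule (ZMod p) (Fin (2*m) → ZMod p) //
        (∀ x ∈ W, ∀ y ∈ W, triForm p (2*m) x y = 0) ∧
        Module.finrank (ZMod p) W = m} with hL
  set T := {f : Fin m → (Fin (2*m) → ZMod p) //
        LinearIndependent (ZMod p) f ∧ ∀ i j, Lagr.B p (2*m) (f i) (f j) = 0} with hT
  have φiso : ∀ f : T, ∀ x ∈ span (ZMod p) (Set.range f.1), ∀ y ∈ span (ZMod p) (Set.range f.1),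
      triForm p (2*m) x y = 0 := fun f =>
    Lagr.span_isotropic (Lagr.B p (2*m)) _ (by rintro x ⟨i, rfl⟩ y ⟨j, rfl⟩; exact f.2.2 i j)
  have φfr : ∀ f : T, finrank (ZMod p) (span (ZMod p) (Set.range f.1)) = m := fun f => by
    rw [finrank_span_eq_card f.2.1, Fintype.card_fin]
  set φ : T → L := fun f => ⟨span (ZMod p) (Set.range f.1), φiso f, φfr f⟩ with hφ
  have e3 : (Σ W : L, {f : T // φ f = W}) ≃ T := Equiv.sigmaFiberEquiv φ
  have e4 : ∀ W : L, {f : T // φ f = W} ≃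
      {g : Fin m → ↥W.1 // LinearIndependent (ZMod p) g} := by
    intro W
    refine
      { toFun := fun f => ⟨fun i => ⟨f.1.1 i, ?_⟩, ?_⟩
        invFun := fun g => ⟨⟨fun i => (g.1 i : Fin (2*m) → ZMod p), ?_, ?_⟩, ?_⟩
        left_inv := fun f => Subtype.ext (Subtype.ext rfl)
        right_inv := fun g => Subtype.ext (funext fun i => Subtype.ext rfl) }
    · have h := congrArg Subtype.val f.2
      simp only [hφ] at h
      rw [← h]
      exact subset_span ⟨i, rfl⟩
    · exact LinearIndependent.of_comp W.1.subtype f.1.2.1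
    · exact g.2.map' W.1.subtype (Submodule.ker_subtype W.1)
    · intro i j
      exact W.2.1 _ (g.1 i).2 _ (g.1 j).2
    · apply Subtype.ext
      show span (ZMod p) (Set.range fun i => ((g.1 i : Fin (2*m) → ZMod p))) = W.1
      have hle : span (ZMod p) (Set.range fun i => ((g.1 i : Fin (2*m) → ZMod p))) ≤ W.1 :=
        span_le.mpr (by rintro _ ⟨i, rfl⟩; exact (g.1 i).2)
      refine Submodule.eq_of_le_of_finrank_le hle ?_
      show Module.finrank (ZMod p) ↥W.1 ≤
        Module.finrank (ZMod p) ↥(span (ZMod p) (Set.range (⇑W.1.subtype ∘ g.1)))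
      rw [W.2.2, finrank_span_eq_card (g.2.map' W.1.subtype (Submodule.ker_subtype W.1)),
        Fintype.card_fin]
  have fibcard : ∀ W : L, Nat.card {g : Fin m → ↥W.1 // LinearIndependent (ZMod p) g}
      = ∏ j ∈ Finset.range m, (p ^ m - p ^ j) := fun W =>
    Lagr.count_indep m m W.2.2
  have claim2 : Nat.card T = Nat.card L * ∏ j ∈ Finset.range m, (p ^ m - p ^ j) := by
    rw [← Nat.card_congr e3]
    letI : Fintype L := Fintype.ofFinite _
    letI : ∀ W : L, Fintype {f : T // φ f = W} := fun W => Fintype.ofFinite _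
    rw [Nat.card_eq_fintype_card, Fintype.card_sigma,
      Finset.sum_congr rfl fun W _ => by
        rw [← Nat.card_eq_fintype_card, Nat.card_congr (e4 W), fibcard W],
      Finset.sum_const, smul_eq_mul, Finset.card_univ, Nat.card_eq_fintype_card]
  -- Step 3 : arithmetic
  have key : Nat.card L * ∏ j ∈ Finset.range m, (p ^ m - p ^ j)
      = ∏ j ∈ Finset.range m, (p ^ (2*m - j) - p ^ j) := by
    rw [← claim2, claim1]
  have hsplit : ∏ j ∈ Finset.range m, (p ^ (2*m - j) - p ^ j)
      = (∏ j ∈ Finset.range m, (p ^ (m - j) + 1)) * ∏ j ∈ Finset.range m, (p ^ m - p ^ j) := by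
    rw [← Finset.prod_mul_distrib]
    refine Finset.prod_congr rfl fun j hj => ?_
    exact Lagr.term_id hp.one_lt (Finset.mem_range.mp hj)
  have hrefl2 : ∏ j ∈ Finset.range m, (p ^ (m - j) + 1)
      = ∏ i ∈ Finset.range m, (p ^ (i + 1) + 1) := by
    rw [← Finset.prod_range_reflect (fun i => p ^ (i + 1) + 1) m]
    refine Finset.prod_congr rfl fun j hj => ?_
    have hj' := Finset.mem_range.mp hj
    congr 2
    omega
  have hpos : 0 < ∏ j ∈ Finset.range m, (p ^ m - p ^ j) := by
    refine Finset.prod_pos fun j hj => ?_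
    have hj' := Finset.mem_range.mp hj
    have := Nat.pow_lt_pow_right hp.one_lt hj'
    omega
  refine Nat.eq_of_mul_eq_mul_right hpos ?_
  rw [key, hsplit, hrefl2]
end

section
/- (Contraction lemma / Step 2.) Let p be a prime and n ≥ 2. Let F be a maximal totally isotropic subspace (pre-Lagrangian) of ((ZMod p)^{2n−1}, φ_{2n−1}). Let F₁ = { y ∈ F : y_{2n−2} = 0 } and let F₂ ⊆ (ZMod p)^{2n−3} be the image of F₁ under the linear projection sending y = (y₁,…,y_{2n−1}) to its first 2n−3 coordinates (y₁,…,y_{2n−3}). Then F₂ is a maximal totally isotropic subspace of ((ZMod p)^{2n−3}, φ_{2n−3}); in particular dim F₂ = n−1. -/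
namespace TriAux

variable {p N : ℕ}

lemma triForm_add_left (x x' y : Fin N → ZMod p) :
    triForm p N (x + x') y = triForm p N x y + triForm p N x' y := by
  unfold triForm
  rw [← Finset.sum_add_distrib]
  refine Finset.sum_congr rfl fun i _ => ?_
  rw [← Finset.sum_add_distrib]
  refine Finset.sum_congr rfl fun j _ => ?_
  simp only [Pi.add_apply]; ring

lemma triForm_smul_left (a : ZMod p) (x y : Fin N → ZMod p) :
    triForm p N (a • x) y = a * triForm p N x y := by
  unfold triForm
  rw [Finset.mul_sum]
  refine Finset.sum_congr rfl fun i _ => ?_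
  rw [Finset.mul_sum]
  refine Finset.sum_congr rfl fun j _ => ?_
  simp only [Pi.smul_apply, smul_eq_mul]; ring

lemma triForm_skew (x y : Fin N → ZMod p) : triForm p N y x = - triForm p N x y := by
  have h : triForm p N y x + triForm p N x y = 0 := by
    unfold triForm
    rw [Finset.sum_comm, ← Finset.sum_add_distrib]
    refine Finset.sum_eq_zero fun i _ => ?_
    rw [← Finset.sum_add_distrib]
    refine Finset.sum_eq_zero fun j _ => ?_
    split_ifs <;> first | omega | ring
  exact eq_neg_of_add_eq_zero_left h

lemma triForm_alt (x : Fin N → ZMod p) : triForm p N x x = 0 := by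
  unfold triForm
  rw [← Fintype.sum_prod_type']
  refine Finset.sum_ninvolution (fun a => (a.2, a.1)) ?_ ?_ (fun a => Finset.mem_univ _) (fun a => rfl)
  · intro a
    dsimp only
    split_ifs <;> first | omega | ring
  · intro a ha hne
    apply ha
    have h1 : (a.2 : ℕ) = (a.1 : ℕ) := congrArg (fun z : Fin N × Fin N => (z.1 : ℕ)) hne
    split_ifs <;> first | omega | ring

lemma triForm_add_right (x y y' : Fin N → ZMod p) :
    triForm p N x (y + y') = triForm p N x y + triForm p N x y' := by
  rw [← neg_neg (triForm p N x (y + y')), ← triForm_skew, triForm_add_left,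
    triForm_skew x y, triForm_skew x y']
  ring

lemma triForm_smul_right (a : ZMod p) (x y : Fin N → ZMod p) :
    triForm p N x (a • y) = a * triForm p N x y := by
  rw [← neg_neg (triForm p N x (a • y)), ← triForm_skew, triForm_smul_left, triForm_skew x y]
  ring

lemma triForm_zero_left (y : Fin N → ZMod p) : triForm p N 0 y = 0 := by
  have := triForm_smul_left (0 : ZMod p) (0 : Fin N → ZMod p) y
  simpa using this

/-- value of the form against the "delta at `N+1`" vector -/
lemma triForm_delta (y : Fin (N+2) → ZMod p) :
    triForm p (N+2) (fun i => if (i : ℕ) = N+1 then (1 : ZMod p) else 0) y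
      = - y ⟨N, by omega⟩ := by
  unfold triForm
  rw [Finset.sum_eq_single (⟨N+1, by omega⟩ : Fin (N+2))]
  · rw [Finset.sum_eq_single (⟨N, by omega⟩ : Fin (N+2))]
    · have h1 : ¬ (N = N + 1 + 1) := by omega
      simp [h1]
    · intro j _ hj
      have hj' : (j : ℕ) ≠ N := fun h => hj (Fin.ext h)
      have hjlt : (j : ℕ) < N + 2 := j.isLt
      rw [if_neg (by simp; omega), if_neg (by simp; omega)]
      ring
    · intro h; exact absurd (Finset.mem_univ _) h
  · intro i _ hi
    refine Finset.sum_eq_zero fun j _ => ?_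
    have hi' : (i : ℕ) ≠ N + 1 := fun h => hi (Fin.ext h)
    simp [hi']
  · intro h; exact absurd (Finset.mem_univ _) h

/-- restriction: if the `N`-th coordinates vanish, the big form computes the small form -/
lemma triForm_restrict (x y : Fin (N+2) → ZMod p)
    (hx : x ⟨N, by omega⟩ = 0) (hy : y ⟨N, by omega⟩ = 0) :
    triForm p (N+2) x y
      = triForm p N (fun i => x (Fin.castLE (by omega) i))
          (fun i => y (Fin.castLE (by omega) i)) := by
  classical
  unfold triForm
  rw [← Fintype.sum_prod_type', ← Fintype.sum_prod_type']
  set f : Fin (N+2) × Fin (N+2) → ZMod p := fun a =>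
    (if (a.2 : ℕ) = (a.1 : ℕ) + 1 then (1 : ZMod p)
     else if (a.1 : ℕ) = (a.2 : ℕ) + 1 then -1 else 0) * x a.1 * y a.2 with hf
  have hzx : ∀ a : Fin (N+2) × Fin (N+2), (a.1 : ℕ) = N → f a = 0 := by
    intro a ha
    have : x a.1 = 0 := by
      have : a.1 = ⟨N, by omega⟩ := Fin.ext ha
      rw [this]; exact hx
    simp [hf, this]
  have hzy : ∀ a : Fin (N+2) × Fin (N+2), (a.2 : ℕ) = N → f a = 0 := by
    intro a ha
    have : y a.2 = 0 := by
      have : a.2 = ⟨N, by omega⟩ := Fin.ext ha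
      rw [this]; exact hy
    simp [hf, this]
  set emb : Fin N × Fin N ↪ Fin (N+2) × Fin (N+2) :=
    ⟨fun a => (Fin.castLE (by omega) a.1, Fin.castLE (by omega) a.2), by
      intro a b hab
      have h1 := congrArg (fun z : Fin (N+2) × Fin (N+2) => (z.1 : ℕ)) hab
      have h2 := congrArg (fun z : Fin (N+2) × Fin (N+2) => (z.2 : ℕ)) hab
      simp at h1 h2
      exact Prod.ext (Fin.ext h1) (Fin.ext h2)⟩ with hemb
  rw [show (Finset.univ : Finset (Fin (N+2) × Fin (N+2))).sum f
      = ∑ a ∈ Finset.univ.map emb, f a from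
    (Finset.sum_subset (Finset.subset_univ _) ?_).symm]
  · rw [Finset.sum_map]
    rfl
  · intro a _ ha
    have hnotin : ¬ ((a.1 : ℕ) < N ∧ (a.2 : ℕ) < N) := by
      intro ⟨h1, h2⟩
      apply ha
      rw [Finset.mem_map]
      exact ⟨(⟨(a.1 : ℕ), h1⟩, ⟨(a.2 : ℕ), h2⟩), Finset.mem_univ _, by
        simp [hemb, Prod.ext_iff, Fin.ext_iff]
        exact ⟨rfl, rfl⟩⟩
    by_cases h1 : (a.1 : ℕ) = N
    · exact hzx a h1
    by_cases h2 : (a.2 : ℕ) = N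
    · exact hzy a h2
    have l1 : (a.1 : ℕ) < N + 2 := a.1.isLt
    have l2 : (a.2 : ℕ) < N + 2 := a.2.isLt
    rw [if_neg (by omega), if_neg (by omega)]
    ring

lemma triForm_one {p : ℕ} (x y : Fin 1 → ZMod p) : triForm p 1 x y = 0 := by
  unfold triForm
  rw [Fin.sum_univ_one, Fin.sum_univ_one]
  simp

lemma adjoin_mem {p N : ℕ} (F : Submodule (ZMod p) (Fin N → ZMod p))
    (hiso : ∀ x ∈ F, ∀ y ∈ F, triForm p N x y = 0)
    (hmax : ∀ F' : Submodule (ZMod p) (Fin N → ZMod p),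
        (∀ x ∈ F', ∀ y ∈ F', triForm p N x y = 0) → F ≤ F' → F' = F)
    (v : Fin N → ZMod p) (hv : ∀ y ∈ F, triForm p N v y = 0) : v ∈ F := by
  have hiso' : ∀ x ∈ F ⊔ Submodule.span (ZMod p) {v},
      ∀ y ∈ F ⊔ Submodule.span (ZMod p) {v}, triForm p N x y = 0 := by
    intro x hx y hy
    rw [Submodule.mem_sup] at hx hy
    obtain ⟨f, hf, s, hs, rfl⟩ := hx
    obtain ⟨g, hg, t, ht, rfl⟩ := hy
    rw [Submodule.mem_span_singleton] at hs ht
    obtain ⟨a, rfl⟩ := hs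
    obtain ⟨b, rfl⟩ := ht
    rw [triForm_add_left, triForm_add_right, triForm_add_right, triForm_smul_left,
      triForm_smul_left, triForm_smul_right, triForm_smul_right]
    have h1 := hiso f hf g hg
    have h2 := hv g hg
    have h3 : triForm p N f v = 0 := by rw [triForm_skew v f, hv f hf, neg_zero]
    have h4 := triForm_alt (p := p) v
    rw [h1, h2, h3, h4]
    ring
  have hEq := hmax _ hiso' le_sup_left
  rw [← hEq]
  exact Submodule.mem_sup_right (Submodule.mem_span_singleton_self v)

lemma iso_step {p N : ℕ} (F : Submodule (ZMod p) (Fin (N+2) → ZMod p))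
    (hiso : ∀ x ∈ F, ∀ y ∈ F, triForm p (N+2) x y = 0) :
    ∀ x ∈ Submodule.map
        (LinearMap.funLeft (ZMod p) (ZMod p) (Fin.castLE (by omega : N ≤ N+2)))
        (F ⊓ LinearMap.ker (LinearMap.proj (⟨N, by omega⟩ : Fin (N+2)))),
      ∀ y ∈ Submodule.map
        (LinearMap.funLeft (ZMod p) (ZMod p) (Fin.castLE (by omega : N ≤ N+2)))
        (F ⊓ LinearMap.ker (LinearMap.proj (⟨N, by omega⟩ : Fin (N+2)))),
      triForm p N x y = 0 := by
  intro x hx y hy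
  obtain ⟨a, haFK, rfl⟩ := Submodule.mem_map.mp hx
  obtain ⟨b, hbFK, rfl⟩ := Submodule.mem_map.mp hy
  obtain ⟨haF, haK⟩ := Submodule.mem_inf.mp haFK
  obtain ⟨hbF, hbK⟩ := Submodule.mem_inf.mp hbFK
  have haN : a ⟨N, by omega⟩ = 0 := LinearMap.mem_ker.mp haK
  have hbN : b ⟨N, by omega⟩ = 0 := LinearMap.mem_ker.mp hbK
  have h := hiso a haF b hbF
  rw [triForm_restrict a b haN hbN] at h
  exact h

lemma max_step {p N : ℕ} (hp : p.Prime) (F : Submodule (ZMod p) (Fin (N+2) → ZMod p))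
    (hiso : ∀ x ∈ F, ∀ y ∈ F, triForm p (N+2) x y = 0)
    (hmax : ∀ F' : Submodule (ZMod p) (Fin (N+2) → ZMod p),
        (∀ x ∈ F', ∀ y ∈ F', triForm p (N+2) x y = 0) → F ≤ F' → F' = F) :
    ∀ W : Submodule (ZMod p) (Fin N → ZMod p),
      (∀ x ∈ W, ∀ y ∈ W, triForm p N x y = 0) →
      Submodule.map (LinearMap.funLeft (ZMod p) (ZMod p) (Fin.castLE (by omega : N ≤ N+2)))
        (F ⊓ LinearMap.ker (LinearMap.proj (⟨N, by omega⟩ : Fin (N+2)))) ≤ W →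
      W = Submodule.map (LinearMap.funLeft (ZMod p) (ZMod p) (Fin.castLE (by omega : N ≤ N+2)))
        (F ⊓ LinearMap.ker (LinearMap.proj (⟨N, by omega⟩ : Fin (N+2)))) := by
  haveI := Fact.mk hp
  intro W hWiso hle
  refine le_antisymm (fun w hw => ?_) hle
  set δ : Fin (N+2) → ZMod p := fun i => if (i : ℕ) = N+1 then (1 : ZMod p) else 0 with hδ
  set w0 : Fin (N+2) → ZMod p := fun i => if h : (i : ℕ) < N then w ⟨(i : ℕ), h⟩ else 0 with hw0
  have hw0N : w0 ⟨N, by omega⟩ = 0 := by simp [hw0]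
  have hπw0 : (fun i : Fin N => w0 (Fin.castLE (by omega) i)) = w := by
    funext i
    simp [hw0, i.isLt]
  have hcore : ∀ y ∈ F, y ⟨N, by omega⟩ = 0 → triForm p (N+2) w0 y = 0 := by
    intro y hyF hyN
    rw [triForm_restrict w0 y hw0N hyN, hπw0]
    refine hWiso w hw _ (hle ?_)
    exact Submodule.mem_map_of_mem (Submodule.mem_inf.mpr ⟨hyF, LinearMap.mem_ker.mpr hyN⟩)
  by_cases hA : ∀ y ∈ F, y ⟨N, by omega⟩ = 0
  · have hw0F : w0 ∈ F := adjoin_mem F hiso hmax w0 (fun y hy => hcore y hy (hA y hy))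
    exact Submodule.mem_map.mpr
      ⟨w0, Submodule.mem_inf.mpr ⟨hw0F, LinearMap.mem_ker.mpr hw0N⟩, hπw0⟩
  · push_neg at hA
    obtain ⟨y₀, hy₀F, hy₀N⟩ := hA
    set y₁ : Fin (N+2) → ZMod p := (y₀ ⟨N, by omega⟩)⁻¹ • y₀ with hy₁
    have hy₁F : y₁ ∈ F := F.smul_mem _ hy₀F
    have hy₁N : y₁ ⟨N, by omega⟩ = 1 := by
      rw [hy₁]
      simp only [Pi.smul_apply, smul_eq_mul]
      exact inv_mul_cancel₀ hy₀N
    set c : ZMod p := triForm p (N+2) w0 y₁ with hc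
    set v : Fin (N+2) → ZMod p := w0 + c • δ with hv
    have hδN : δ ⟨N, by omega⟩ = 0 := by simp [hδ]
    have hvN : v ⟨N, by omega⟩ = 0 := by
      rw [hv]
      simp [hw0N, hδN]
    have hδy : ∀ y : Fin (N+2) → ZMod p, triForm p (N+2) δ y = - y ⟨N, by omega⟩ :=
      fun y => triForm_delta y
    have hperp : ∀ y ∈ F, triForm p (N+2) v y = 0 := by
      intro y hyF
      have hy'F : y - y ⟨N, by omega⟩ • y₁ ∈ F := F.sub_mem hyF (F.smul_mem _ hy₁F)
      have hy'N : (y - y ⟨N, by omega⟩ • y₁) ⟨N, by omega⟩ = 0 := by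
        simp [hy₁N]
      have e1 : triForm p (N+2) v (y - y ⟨N, by omega⟩ • y₁) = 0 := by
        rw [hv, triForm_add_left, triForm_smul_left, hδy, hy'N, hcore _ hy'F hy'N]
        ring
      have e2 : triForm p (N+2) v y₁ = 0 := by
        rw [hv, triForm_add_left, triForm_smul_left, hδy, hy₁N, ← hc]
        ring
      have hdecomp : y = (y - y ⟨N, by omega⟩ • y₁) + y ⟨N, by omega⟩ • y₁ := by
        abel
      calc triForm p (N+2) v y
          = triForm p (N+2) v ((y - y ⟨N, by omega⟩ • y₁) + y ⟨N, by omega⟩ • y₁) := by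
            rw [← hdecomp]
        _ = 0 := by
            rw [triForm_add_right, triForm_smul_right, e1, e2]
            ring
    have hvF : v ∈ F := adjoin_mem F hiso hmax v hperp
    refine Submodule.mem_map.mpr
      ⟨v, Submodule.mem_inf.mpr ⟨hvF, LinearMap.mem_ker.mpr hvN⟩, ?_⟩
    funext i
    have hlt : (i : ℕ) < N := i.isLt
    have hne : ¬ ((i : ℕ) = N + 1) := by omega
    simp [LinearMap.funLeft_apply, hv, hw0, hδ, hlt, hne]

set_option maxHeartbeats 1000000 in
lemma dim_step {p N : ℕ} (hp : p.Prime) (F : Submodule (ZMod p) (Fin (N+2) → ZMod p))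
    (hiso : ∀ x ∈ F, ∀ y ∈ F, triForm p (N+2) x y = 0)
    (hmax : ∀ F' : Submodule (ZMod p) (Fin (N+2) → ZMod p),
        (∀ x ∈ F', ∀ y ∈ F', triForm p (N+2) x y = 0) → F ≤ F' → F' = F) :
    Module.finrank (ZMod p) F
      = Module.finrank (ZMod p)
          (Submodule.map (LinearMap.funLeft (ZMod p) (ZMod p) (Fin.castLE (by omega : N ≤ N+2)))
            (F ⊓ LinearMap.ker (LinearMap.proj (⟨N, by omega⟩ : Fin (N+2))))) + 1 := by
  haveI := Fact.mk hp
  set π : (Fin (N+2) → ZMod p) →ₗ[ZMod p] (Fin N → ZMod p) :=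
    LinearMap.funLeft (ZMod p) (ZMod p) (Fin.castLE (by omega : N ≤ N+2)) with hπ
  set K : Submodule (ZMod p) (Fin (N+2) → ZMod p) :=
    LinearMap.ker (LinearMap.proj (⟨N, by omega⟩ : Fin (N+2))) with hK
  set δ : Fin (N+2) → ZMod p := fun i => if (i : ℕ) = N+1 then (1 : ZMod p) else 0 with hδ
  have hδN1 : δ ⟨N+1, by omega⟩ = 1 := by simp [hδ]
  by_cases hA : ∀ y ∈ F, y ⟨N, by omega⟩ = 0
  · have hFK : F ⊓ K = F := inf_eq_left.mpr (fun y hy => LinearMap.mem_ker.mpr (hA y hy))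
    rw [hFK]
    have hδF : δ ∈ F := adjoin_mem F hiso hmax δ
      (fun y hy => by rw [triForm_delta, hA y hy, neg_zero])
    set g : ↥F →ₗ[ZMod p] (Fin N → ZMod p) := π.comp F.subtype with hg
    have hrange : LinearMap.range g = Submodule.map π F := by
      rw [hg, LinearMap.range_comp, Submodule.range_subtype]
    set e : ↥(LinearMap.ker g) →ₗ[ZMod p] ZMod p :=
      (LinearMap.proj (⟨N+1, by omega⟩ : Fin (N+2))).comp
        (F.subtype.comp (LinearMap.ker g).subtype) with he
    have hzero : ∀ x : ↥(LinearMap.ker g), e x = 0 → x = 0 := by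
      intro x hx
      have hxg : g (x : ↥F) = 0 := x.2
      have hcoords : ∀ i : Fin (N+2), ((x : ↥F) : Fin (N+2) → ZMod p) i = 0 := by
        intro i
        rcases lt_or_ge (i : ℕ) N with h | h
        · have h2 := congrFun hxg (⟨(i : ℕ), h⟩ : Fin N)
          have h3 : Fin.castLE (by omega : N ≤ N+2) (⟨(i : ℕ), h⟩ : Fin N) = i :=
            Fin.ext rfl
          rw [← h3]
          exact h2
        · have : (i : ℕ) = N ∨ (i : ℕ) = N + 1 := by
            have := i.isLt; omega
          rcases this with h | h
          · have : i = (⟨N, by omega⟩ : Fin (N+2)) := Fin.ext h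
            rw [this]
            exact hA _ (x : ↥F).2
          · have : i = (⟨N+1, by omega⟩ : Fin (N+2)) := Fin.ext h
            rw [this]
            exact hx
      exact Subtype.ext (Subtype.ext (funext hcoords))
    have hbij : Function.Bijective e := by
      constructor
      · intro a b hab
        have : e (a - b) = 0 := by rw [map_sub, hab, sub_self]
        have := hzero _ this
        exact sub_eq_zero.mp this
      · intro a
        have hδker : (⟨δ, hδF⟩ : ↥F) ∈ LinearMap.ker g := by
          rw [LinearMap.mem_ker]
          funext i
          have hne : ¬ ((i : ℕ) = N + 1) := by
            have := i.isLt
            omega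
          simp [hg, hπ, LinearMap.funLeft_apply, hδ, hne]
        refine ⟨a • ⟨⟨δ, hδF⟩, hδker⟩, ?_⟩
        show a • (δ ⟨N+1, by omega⟩) = a
        rw [hδN1, smul_eq_mul, mul_one]
    have hk1 : Module.finrank (ZMod p) (LinearMap.ker g) = 1 := by
      rw [(LinearEquiv.ofBijective e hbij).finrank_eq, Module.finrank_self]
    have hrn := LinearMap.finrank_range_add_finrank_ker g
    rw [hrange, hk1] at hrn
    exact hrn.symm
  · push_neg at hA
    obtain ⟨y₀, hy₀F, hy₀N⟩ := hA
    set y₁ : Fin (N+2) → ZMod p := (y₀ ⟨N, by omega⟩)⁻¹ • y₀ with hy₁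
    have hy₁F : y₁ ∈ F := F.smul_mem _ hy₀F
    have hy₁N : y₁ ⟨N, by omega⟩ = 1 := by
      rw [hy₁]
      simp only [Pi.smul_apply, smul_eq_mul]
      exact inv_mul_cancel₀ hy₀N
    set g : ↥(F ⊓ K) →ₗ[ZMod p] (Fin N → ZMod p) := π.comp (F ⊓ K).subtype with hg
    have hrange : LinearMap.range g = Submodule.map π (F ⊓ K) := by
      rw [hg, LinearMap.range_comp, Submodule.range_subtype]
    have hker : LinearMap.ker g = ⊥ := by
      rw [eq_bot_iff]
      intro x hx
      have hxF : (x : Fin (N+2) → ZMod p) ∈ F := x.2.1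
      have hxN : (x : Fin (N+2) → ZMod p) ⟨N, by omega⟩ = 0 := x.2.2
      have hxg : g x = 0 := hx
      have hrep : (x : Fin (N+2) → ZMod p)
          = (x : Fin (N+2) → ZMod p) ⟨N+1, by omega⟩ • δ := by
        funext i
        rcases lt_or_ge (i : ℕ) N with h | h
        · have h2 := congrFun hxg (⟨(i : ℕ), h⟩ : Fin N)
          have h3 : Fin.castLE (by omega : N ≤ N+2) (⟨(i : ℕ), h⟩ : Fin N) = i :=
            Fin.ext rfl
          have hne : ¬ ((i : ℕ) = N + 1) := by omega
          have hxi : (x : Fin (N+2) → ZMod p) i = 0 := by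
            rw [← h3]
            exact h2
          rw [hxi, Pi.smul_apply, hδ]
          simp [hne]
        · have : (i : ℕ) = N ∨ (i : ℕ) = N + 1 := by
            have := i.isLt; omega
          rcases this with h | h
          · have hi : i = (⟨N, by omega⟩ : Fin (N+2)) := Fin.ext h
            rw [hi]
            simp [hxN, hδ, hδN1]
          · have hi : i = (⟨N+1, by omega⟩ : Fin (N+2)) := Fin.ext h
            rw [hi, Pi.smul_apply, hδN1, smul_eq_mul, mul_one]
      have hz : (x : Fin (N+2) → ZMod p) ⟨N+1, by omega⟩ = 0 := by
        have h0 := hiso _ hxF y₁ hy₁F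
        rw [hrep, triForm_smul_left] at h0
        rw [triForm_delta, hy₁N] at h0
        simpa using h0
      have : (x : Fin (N+2) → ZMod p) = 0 := by
        rw [hrep, hz, zero_smul]
      exact Submodule.mem_bot _ |>.mpr (Subtype.ext this)
    have hrn1 := LinearMap.finrank_range_add_finrank_ker g
    rw [hrange, hker, finrank_bot, add_zero] at hrn1
    set h2 : ↥F →ₗ[ZMod p] ZMod p :=
      (LinearMap.proj (⟨N, by omega⟩ : Fin (N+2))).comp F.subtype with hh2
    have hrange2 : LinearMap.range h2 = ⊤ := by
      rw [Submodule.eq_top_iff']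
      intro a
      refine ⟨a • ⟨y₁, hy₁F⟩, ?_⟩
      show a • (y₁ ⟨N, by omega⟩) = a
      rw [hy₁N, smul_eq_mul, mul_one]
    have hker2 : Module.finrank (ZMod p) (LinearMap.ker h2)
        = Module.finrank (ZMod p) ↥(F ⊓ K) := by
      have hcomap : LinearMap.ker h2 = Submodule.comap F.subtype (F ⊓ K) := by
        rw [hh2, LinearMap.ker_comp, Submodule.comap_inf, Submodule.comap_subtype_self,
          top_inf_eq]
      rw [hcomap,
        (Submodule.comapSubtypeEquivOfLe (inf_le_left : F ⊓ K ≤ F)).finrank_eq]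
    have hrn2 := LinearMap.finrank_range_add_finrank_ker h2
    rw [hrange2, finrank_top, Module.finrank_self, hker2] at hrn2
    omega

lemma maxIso_finrank {p : ℕ} (hp : p.Prime) :
    ∀ k : ℕ, ∀ F : Submodule (ZMod p) (Fin (2*k+1) → ZMod p),
      (∀ x ∈ F, ∀ y ∈ F, triForm p (2*k+1) x y = 0) →
      (∀ F' : Submodule (ZMod p) (Fin (2*k+1) → ZMod p),
          (∀ x ∈ F', ∀ y ∈ F', triForm p (2*k+1) x y = 0) → F ≤ F' → F' = F) →
      Module.finrank (ZMod p) F = k + 1 := by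
  haveI := Fact.mk hp
  intro k
  induction k with
  | zero =>
    intro F hiso hmax
    have hTop : (⊤ : Submodule (ZMod p) (Fin (2*0+1) → ZMod p)) = F :=
      hmax ⊤ (fun x _ y _ => triForm_one x y) le_top
    rw [← hTop, finrank_top, Module.finrank_pi, Fintype.card_fin]
  | succ k ih =>
    intro F hiso hmax
    have h1 := iso_step (N := 2*k+1) F hiso
    have h2 := max_step (N := 2*k+1) hp F hiso hmax
    have h3 := dim_step (N := 2*k+1) hp F hiso hmax
    have h4 := ih _ h1 h2
    exact h3.trans (by rw [h4])

end TriAux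


/-- **contraction lemma / Step 2.** Let `p` be a prime, `n ≥ 2`, and `F` a
maximal totally isotropic subspace (pre-Lagrangian) of `((ZMod p)^{2n-1}, φ_{2n-1})`.
Let `F₁ = { y ∈ F : y_{2n-2} = 0 }` (1-indexed; 0-indexed coordinate `2n-3`) and let
`F₂ ⊆ (ZMod p)^{2n-3}` be the image of `F₁` under the projection to the first `2n-3`
coordinates.  Then `F₂` is a maximal totally isotropic subspace of
`((ZMod p)^{2n-3}, φ_{2n-3})`; in particular `dim F₂ = n-1`. -/
theorem contraction_lemma (p n : ℕ) (hp : p.Prime) (hn : 2 ≤ n)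
    (F : Submodule (ZMod p) (Fin (2*n-1) → ZMod p))
    (hiso : ∀ x ∈ F, ∀ y ∈ F, triForm p (2*n-1) x y = 0)
    (hmax : ∀ F' : Submodule (ZMod p) (Fin (2*n-1) → ZMod p),
        (∀ x ∈ F', ∀ y ∈ F', triForm p (2*n-1) x y = 0) → F ≤ F' → F' = F)
    (F₂ : Submodule (ZMod p) (Fin (2*n-3) → ZMod p))
    (hF₂ : F₂ = Submodule.map
        (LinearMap.funLeft (ZMod p) (ZMod p) (Fin.castLE (by omega : 2*n-3 ≤ 2*n-1)))
        (F ⊓ LinearMap.ker (LinearMap.proj (⟨2*n-3, by omega⟩ : Fin (2*n-1))))) :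
    (∀ x ∈ F₂, ∀ y ∈ F₂, triForm p (2*n-3) x y = 0) ∧
    (∀ W : Submodule (ZMod p) (Fin (2*n-3) → ZMod p),
        (∀ x ∈ W, ∀ y ∈ W, triForm p (2*n-3) x y = 0) → F₂ ≤ W → W = F₂) ∧
    Module.finrank (ZMod p) F₂ = n - 1 := by
  subst hF₂
  obtain ⟨k, rfl⟩ : ∃ k, n = k + 2 := ⟨n - 2, by omega⟩
  have h1 := TriAux.iso_step (N := 2*k+1) F hiso
  have h2 := TriAux.max_step (N := 2*k+1) hp F hiso hmax
  have h3 := TriAux.maxIso_finrank hp k _ h1 h2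
  exact ⟨h1, h2, h3⟩
end

section
/- (Assion for p = 3, Wajnryb for odd p.) Let p be an odd prime and m ≥ 1. For each standard basis vector e_i of (ZMod p)^{2m} (1 ≤ i ≤ 2m), let τ_i be the transvection τ_i(a) = a − φ_{2m}(a, e_i)·e_i. Then the subgroup of GL((ZMod p)^{2m}) generated by the 2m braid-like transvections τ₁, …, τ_{2m} is exactly the full group of isometries of φ_{2m}, i.e. the symplectic group { g ∈ GL((ZMod p)^{2m}) : φ_{2m}(g a, g b) = φ_{2m}(a,b) for all a, b }. -/
set_option linter.unreachableTactic false
set_option linter.unusedTactic false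
set_option linter.unnecessarySeqFocus false

namespace TGS

variable {p N : ℕ}

lemma sum_spike {M : Type*} [AddCommMonoid M] (f : Fin N → M) (t : ℕ) :
    (∑ j : Fin N, if (j : ℕ) = t then f j else 0) = if h : t < N then f ⟨t, h⟩ else 0 := by
  split_ifs with h
  · rw [Finset.sum_eq_single (⟨t, h⟩ : Fin N)]
    · simp
    · intro j _ hj
      rw [if_neg]
      intro hc; exact hj (Fin.ext hc)
    · simp
  · apply Finset.sum_eq_zero
    intro j _
    rw [if_neg]
    intro hc; exact h (hc ▸ j.isLt)

lemma sum_spike' {M : Type*} [AddCommMonoid M] (f : Fin N → M) (t : ℕ) :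
    (∑ j : Fin N, if t = (j : ℕ) + 1 then f j else 0)
      = if h : 0 < t ∧ t - 1 < N then f ⟨t - 1, h.2⟩ else 0 := by
  have : ∀ j : Fin N, (t = (j:ℕ)+1) ↔ ((j:ℕ) = t - 1 ∧ 0 < t ∧ t - 1 < N) := by
    intro j; have := j.isLt; omega
  calc (∑ j : Fin N, if t = (j : ℕ) + 1 then f j else 0)
      = ∑ j : Fin N, if (j:ℕ) = t - 1 then (if 0 < t ∧ t - 1 < N then f j else 0) else 0 := by
        apply Finset.sum_congr rfl
        intro j _
        by_cases h : t = (j:ℕ)+1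
        · rw [if_pos h, if_pos ((this j).mp h).1, if_pos ((this j).mp h).2]
        · rw [if_neg h]
          by_cases h1 : (j:ℕ) = t - 1
          · rw [if_pos h1, if_neg]
            intro hc; exact h ((this j).mpr ⟨h1, hc⟩)
          · rw [if_neg h1]
    _ = if h : t - 1 < N then (if 0 < t ∧ t - 1 < N then f ⟨t-1, h⟩ else 0) else 0 :=
        sum_spike _ _
    _ = if h : 0 < t ∧ t - 1 < N then f ⟨t - 1, h.2⟩ else 0 := by
        split_ifs <;> first | rfl | omega

lemma triForm_eval (x y : Fin N → ZMod p) :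
    triForm p N x y = ∑ i : Fin N, x i *
      ((if h : (i:ℕ)+1 < N then y ⟨(i:ℕ)+1, h⟩ else 0)
        - (if 0 < (i:ℕ) then y ⟨(i:ℕ)-1, lt_of_le_of_lt (Nat.sub_le _ _) i.isLt⟩ else 0)) := by
  unfold triForm
  apply Finset.sum_congr rfl
  intro i _
  have hstep : ∀ j : Fin N,
      (if (j : ℕ) = (i : ℕ) + 1 then (1 : ZMod p)
       else if (i : ℕ) = (j : ℕ) + 1 then -1 else 0) * x i * y j
      = (if (j:ℕ) = (i:ℕ)+1 then x i * y j else 0)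
        + (if (i:ℕ) = (j:ℕ)+1 then -(x i * y j) else 0) := by
    intro j
    split_ifs with h1 h2 <;> first | omega | ring
  rw [Finset.sum_congr rfl (fun j _ => hstep j), Finset.sum_add_distrib,
    sum_spike (fun j => x i * y j), sum_spike' (fun j => -(x i * y j))]
  have hin : (i:ℕ) - 1 < N := lt_of_le_of_lt (Nat.sub_le _ _) i.isLt
  split_ifs <;> first | omega | ring

lemma triForm_add_left (x x' y : Fin N → ZMod p) :
    triForm p N (x + x') y = triForm p N x y + triForm p N x' y := by
  unfold triForm
  rw [← Finset.sum_add_distrib]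
  apply Finset.sum_congr rfl
  intro i _
  rw [← Finset.sum_add_distrib]
  apply Finset.sum_congr rfl
  intro j _
  simp only [Pi.add_apply]
  ring

lemma triForm_add_right (x y y' : Fin N → ZMod p) :
    triForm p N x (y + y') = triForm p N x y + triForm p N x y' := by
  unfold triForm
  rw [← Finset.sum_add_distrib]
  apply Finset.sum_congr rfl
  intro i _
  rw [← Finset.sum_add_distrib]
  apply Finset.sum_congr rfl
  intro j _
  simp only [Pi.add_apply]
  ring

lemma triForm_smul_left (c : ZMod p) (x y : Fin N → ZMod p) :
    triForm p N (c • x) y = c * triForm p N x y := by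
  unfold triForm
  rw [Finset.mul_sum]
  apply Finset.sum_congr rfl
  intro i _
  rw [Finset.mul_sum]
  apply Finset.sum_congr rfl
  intro j _
  simp only [Pi.smul_apply, smul_eq_mul]
  ring

lemma triForm_smul_right (c : ZMod p) (x y : Fin N → ZMod p) :
    triForm p N x (c • y) = c * triForm p N x y := by
  unfold triForm
  rw [Finset.mul_sum]
  apply Finset.sum_congr rfl
  intro i _
  rw [Finset.mul_sum]
  apply Finset.sum_congr rfl
  intro j _
  simp only [Pi.smul_apply, smul_eq_mul]
  ring

lemma triForm_zero_left (y : Fin N → ZMod p) : triForm p N 0 y = 0 := by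
  unfold triForm
  apply Finset.sum_eq_zero; intro i _
  apply Finset.sum_eq_zero; intro j _
  simp

lemma triForm_zero_right (x : Fin N → ZMod p) : triForm p N x 0 = 0 := by
  unfold triForm
  apply Finset.sum_eq_zero; intro i _
  apply Finset.sum_eq_zero; intro j _
  simp

lemma triForm_neg_left (x y : Fin N → ZMod p) : triForm p N (-x) y = -triForm p N x y := by
  have := triForm_smul_left (-1 : ZMod p) x y
  simpa using this

lemma triForm_sub_left (x x' y : Fin N → ZMod p) :
    triForm p N (x - x') y = triForm p N x y - triForm p N x' y := by
  rw [sub_eq_add_neg, triForm_add_left, triForm_neg_left, sub_eq_add_neg]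

lemma triForm_neg_right (x y : Fin N → ZMod p) : triForm p N x (-y) = -triForm p N x y := by
  have := triForm_smul_right (-1 : ZMod p) x y
  simpa using this

lemma triForm_sub_right (x y y' : Fin N → ZMod p) :
    triForm p N x (y - y') = triForm p N x y - triForm p N x y' := by
  rw [sub_eq_add_neg, triForm_add_right, triForm_neg_right, sub_eq_add_neg]

lemma triForm_skew (x y : Fin N → ZMod p) : triForm p N x y = -triForm p N y x := by
  have h : triForm p N x y + triForm p N y x = 0 := by
    unfold triForm
    rw [Finset.sum_comm (f := fun (i j : Fin N) =>
      (if (j : ℕ) = (i : ℕ) + 1 then (1 : ZMod p)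
       else if (i : ℕ) = (j : ℕ) + 1 then -1 else 0) * y i * x j)]
    rw [← Finset.sum_add_distrib]
    apply Finset.sum_eq_zero
    intro i _
    rw [← Finset.sum_add_distrib]
    apply Finset.sum_eq_zero
    intro j _
    split_ifs <;> first | omega | ring
  linear_combination h

lemma triForm_self (x : Fin N → ZMod p) : triForm p N x x = 0 := by
  unfold triForm
  rw [← Finset.sum_product']
  apply Finset.sum_involution (fun a _ => a.swap)
  · intro a _
    simp only [Prod.fst_swap, Prod.snd_swap]
    split_ifs <;> first | omega | ring
  · intro a _ hf hc
    apply hf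
    have h12 : a.2 = a.1 := congrArg Prod.fst hc
    rw [h12]
    rw [if_neg (by omega), if_neg (by omega)]
    ring
  · intro a ha; simp
  · intro a ha; simp

end TGS
namespace TGS

variable {p N : ℕ}

lemma triForm_single_left (k : Fin N) (c : ZMod p) (x : Fin N → ZMod p) :
    triForm p N (Pi.single k c) x
      = c * ((if h : (k:ℕ)+1 < N then x ⟨(k:ℕ)+1, h⟩ else 0)
        - (if 0 < (k:ℕ) then x ⟨(k:ℕ)-1, lt_of_le_of_lt (Nat.sub_le _ _) k.isLt⟩ else 0)) := by
  rw [triForm_eval]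
  have : ∀ i : Fin N, (Pi.single k c : Fin N → ZMod p) i *
      ((if h : (i:ℕ)+1 < N then x ⟨(i:ℕ)+1, h⟩ else 0)
        - (if 0 < (i:ℕ) then x ⟨(i:ℕ)-1, lt_of_le_of_lt (Nat.sub_le _ _) i.isLt⟩ else 0))
      = if i = k then c * ((if h : (i:ℕ)+1 < N then x ⟨(i:ℕ)+1, h⟩ else 0)
        - (if 0 < (i:ℕ) then x ⟨(i:ℕ)-1, lt_of_le_of_lt (Nat.sub_le _ _) i.isLt⟩ else 0)) else 0 := by
    intro i
    rw [Pi.single_apply]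
    split_ifs <;> ring
  rw [Finset.sum_congr rfl (fun i _ => this i), Finset.sum_ite_eq' Finset.univ k]
  simp

lemma triForm_single_right (k : Fin N) (c : ZMod p) (x : Fin N → ZMod p) :
    triForm p N x (Pi.single k c)
      = c * ((if 0 < (k:ℕ) then x ⟨(k:ℕ)-1, lt_of_le_of_lt (Nat.sub_le _ _) k.isLt⟩ else 0)
        - (if h : (k:ℕ)+1 < N then x ⟨(k:ℕ)+1, h⟩ else 0)) := by
  rw [triForm_skew, triForm_single_left]
  ring

/-- values of the form on pairs of standard basis vectors -/
lemma triForm_single_single (a b : ℕ) (ha : a < N) (hb : b < N) (c d : ZMod p) :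
    triForm p N (Pi.single ⟨a, ha⟩ c) (Pi.single (⟨b, hb⟩ : Fin N) d)
      = c * d * (if b = a + 1 then 1 else if a = b + 1 then -1 else 0) := by
  rw [triForm_single_left]
  by_cases h1 : a + 1 < N
  · rw [dif_pos h1]
    by_cases h0 : 0 < a
    · rw [if_pos h0, Pi.single_apply, Pi.single_apply]
      split_ifs <;> simp_all [Fin.ext_iff] <;> omega
    · rw [if_neg h0, Pi.single_apply]
      split_ifs <;> simp_all [Fin.ext_iff] <;> omega
  · rw [dif_neg h1]
    by_cases h0 : 0 < a
    · rw [if_pos h0, Pi.single_apply]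
      split_ifs <;> simp_all [Fin.ext_iff] <;> omega
    · rw [if_neg h0]
      split_ifs <;> simp_all [Fin.ext_iff] <;> omega

variable (p) in
/-- the symplectic transvection `a ↦ a - l·φ(a,b)·b` -/
def tv (b : Fin N → ZMod p) (l : ZMod p) : (Fin N → ZMod p) ≃ₗ[ZMod p] (Fin N → ZMod p) where
  toFun a := a - (l * triForm p N a b) • b
  map_add' a a' := by
    rw [triForm_add_left]
    module
  map_smul' c a := by
    simp only [RingHom.id_apply]
    rw [triForm_smul_left]
    module
  invFun a := a + (l * triForm p N a b) • b
  left_inv a := by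
    simp only
    rw [triForm_sub_left, triForm_smul_left, triForm_self]
    module
  right_inv a := by
    simp only
    rw [triForm_add_left, triForm_smul_left, triForm_self]
    module

lemma tv_apply (b : Fin N → ZMod p) (l : ZMod p) (a : Fin N → ZMod p) :
    tv p b l a = a - (l * triForm p N a b) • b := rfl

lemma tv_mul (b : Fin N → ZMod p) (l l' : ZMod p) :
    tv p b l * tv p b l' = tv p b (l + l') := by
  apply LinearEquiv.ext
  intro a
  show tv p b l (tv p b l' a) = _
  rw [tv_apply, tv_apply, tv_apply, triForm_sub_left, triForm_smul_left, triForm_self]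
  module

lemma tv_zero (b : Fin N → ZMod p) : tv p b 0 = 1 := by
  apply LinearEquiv.ext
  intro a
  show tv p b 0 a = a
  rw [tv_apply]
  module

lemma tv_pow (b : Fin N → ZMod p) (n : ℕ) : tv p b 1 ^ n = tv p b (n : ZMod p) := by
  induction n with
  | zero => simpa using (tv_zero b).symm
  | succ n ih =>
    rw [pow_succ, ih, tv_mul]
    norm_num

lemma tv_smul (c : ZMod p) (b : Fin N → ZMod p) (l : ZMod p) :
    tv p (c • b) l = tv p b (l * c * c) := by
  apply LinearEquiv.ext
  intro a
  rw [tv_apply, tv_apply, triForm_smul_right]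
  module

lemma tv_isometry (b : Fin N → ZMod p) (l : ZMod p) (a a' : Fin N → ZMod p) :
    triForm p N (tv p b l a) (tv p b l a') = triForm p N a a' := by
  simp only [tv_apply, triForm_sub_left, triForm_sub_right, triForm_smul_left,
    triForm_smul_right, triForm_self, triForm_skew b a']
  ring

end TGS
namespace TGS

variable {p N : ℕ}

variable (p N) in
/-- the symplectic group of `triForm` as a subgroup of the linear automorphism group -/
def sp : Subgroup ((Fin N → ZMod p) ≃ₗ[ZMod p] (Fin N → ZMod p)) where
  carrier := {g | ∀ a b, triForm p N (g a) (g b) = triForm p N a b}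
  one_mem' := by intro a b; rfl
  mul_mem' := by
    intro g h hg hh a b
    show triForm p N (g (h a)) (g (h b)) = _
    rw [hg, hh]
  inv_mem' := by
    intro g hg a b
    show triForm p N (g.symm a) (g.symm b) = _
    rw [← hg (g.symm a) (g.symm b), g.apply_symm_apply, g.apply_symm_apply]

lemma mem_sp {g : (Fin N → ZMod p) ≃ₗ[ZMod p] (Fin N → ZMod p)} :
    g ∈ sp p N ↔ ∀ a b, triForm p N (g a) (g b) = triForm p N a b := Iff.rfl

lemma inv_apply_sp {g : (Fin N → ZMod p) ≃ₗ[ZMod p] (Fin N → ZMod p)}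
    (x : Fin N → ZMod p) : g⁻¹ x = g.symm x := rfl

variable (p N) in
/-- the generating set of the theorem -/
def genSet : Set ((Fin N → ZMod p) ≃ₗ[ZMod p] (Fin N → ZMod p)) :=
  {g | ∃ i : Fin N, ∀ a : Fin N → ZMod p,
      g a = a - triForm p N a (Pi.single i (1 : ZMod p))
        • (Pi.single i (1 : ZMod p) : Fin N → ZMod p)}

variable (p N) in
def Gp : Subgroup ((Fin N → ZMod p) ≃ₗ[ZMod p] (Fin N → ZMod p)) :=
  Subgroup.closure (genSet p N)

lemma genSet_eq : genSet p N
    = {g | ∃ i : Fin N, g = tv p (Pi.single i (1 : ZMod p)) 1} := by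
  ext g
  constructor
  · rintro ⟨i, hi⟩
    refine ⟨i, ?_⟩
    apply LinearEquiv.ext
    intro a
    rw [hi a, tv_apply, one_mul]
  · rintro ⟨i, rfl⟩
    exact ⟨i, fun a => by rw [tv_apply, one_mul]⟩

lemma tv_mem_sp (b : Fin N → ZMod p) (l : ZMod p) : tv p b l ∈ sp p N :=
  fun a a' => tv_isometry b l a a'

lemma Gp_le_sp : Gp p N ≤ sp p N := by
  apply Subgroup.closure_le _ |>.mpr
  rw [genSet_eq]
  rintro g ⟨i, rfl⟩
  exact tv_mem_sp _ _

lemma tv_single_mem (i : Fin N) (l : ZMod p) [NeZero p] :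
    tv p (Pi.single i (1 : ZMod p)) l ∈ Gp p N := by
  obtain ⟨n, rfl⟩ := ZMod.natCast_zmod_surjective l
  rw [← tv_pow]
  apply pow_mem
  apply Subgroup.subset_closure
  rw [genSet_eq]
  exact ⟨i, rfl⟩

lemma conj_tv {g : (Fin N → ZMod p) ≃ₗ[ZMod p] (Fin N → ZMod p)} (hg : g ∈ sp p N)
    (b : Fin N → ZMod p) (l : ZMod p) :
    g * tv p b l * g⁻¹ = tv p (g b) l := by
  apply LinearEquiv.ext
  intro a
  show g (tv p b l (g.symm a)) = _
  rw [tv_apply, tv_apply, map_sub, map_smul, g.apply_symm_apply]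
  congr 2
  rw [← hg (g.symm a) b, g.apply_symm_apply]

variable (p N) in
/-- the set of vectors all of whose transvections lie in the subgroup generated by the
braid transvections -/
def inW (b : Fin N → ZMod p) : Prop := ∀ l : ZMod p, tv p b l ∈ Gp p N

lemma inW_single [NeZero p] (i : Fin N) : inW p N (Pi.single i (1 : ZMod p)) :=
  fun l => tv_single_mem i l

lemma inW_smul {b : Fin N → ZMod p} (hb : inW p N b) (c : ZMod p) : inW p N (c • b) := by
  intro l
  rw [tv_smul]
  exact hb _

lemma inW_apply {g : (Fin N → ZMod p) ≃ₗ[ZMod p] (Fin N → ZMod p)} (hg : g ∈ Gp p N)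
    {b : Fin N → ZMod p} (hb : inW p N b) : inW p N (g b) := by
  intro l
  rw [← conj_tv (Gp_le_sp hg) b l]
  exact mul_mem (mul_mem hg (hb l)) (inv_mem hg)

end TGS
namespace TGS

variable {p N : ℕ}

lemma nondeg (hN : Even N) {u : Fin N → ZMod p}
    (hu : ∀ k : Fin N, triForm p N u (Pi.single k (1 : ZMod p)) = 0) : u = 0 := by
  rcases Nat.eq_zero_or_pos N with h0 | h0
  · exact funext fun j => absurd j.isLt (by omega)
  set u' : ℕ → ZMod p := fun k => if h : k < N then u ⟨k, h⟩ else 0 with hu'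
  have hC : ∀ k, ¬(k < N) → u' k = 0 := by
    intro k hk; rw [hu']; exact dif_neg hk
  have key2 : ∀ k, k < N → (if 0 < k then u' (k - 1) else 0) = u' (k + 1) := by
    intro k hk
    have h1 := hu ⟨k, hk⟩
    rw [triForm_single_right, one_mul] at h1
    have h2 := sub_eq_zero.mp h1
    have e1 : (if 0 < ((⟨k, hk⟩ : Fin N) : ℕ) then
        u ⟨((⟨k, hk⟩ : Fin N) : ℕ) - 1, lt_of_le_of_lt (Nat.sub_le _ _) (Fin.isLt _)⟩ else 0)
        = (if 0 < k then u' (k - 1) else 0) := by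
      simp only [Fin.val_mk, hu']
      split_ifs with h3 h4 <;> first | rfl | omega
    have e2 : (if h : ((⟨k, hk⟩ : Fin N) : ℕ) + 1 < N then
        u ⟨((⟨k, hk⟩ : Fin N) : ℕ) + 1, h⟩ else 0) = u' (k + 1) := by
      simp only [Fin.val_mk, hu']
    rw [e1, e2] at h2
    exact h2
  have hB : ∀ k, 0 < k → k < N → u' (k - 1) = u' (k + 1) := by
    intro k hpos hk
    have := key2 k hk
    rwa [if_pos hpos] at this
  have hA : u' 1 = 0 := by
    have := key2 0 h0
    rw [if_neg (by omega)] at this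
    exact this.symm
  have hodd : ∀ t, u' (2 * t + 1) = 0 := by
    intro t
    induction t with
    | zero => simpa using hA
    | succ t ih =>
      by_cases h : 2 * t + 2 < N
      · have := hB (2 * t + 2) (by omega) h
        have e : 2 * t + 2 - 1 = 2 * t + 1 := by omega
        rw [e] at this
        have e2 : 2 * (t + 1) + 1 = 2 * t + 2 + 1 := by ring
        rw [e2, ← this]
        exact ih
      · apply hC; omega
  have heven : ∀ d t, Even t → N ≤ t + d → u' t = 0 := by
    intro d
    induction d with
    | zero => intro t _ ht; exact hC t (by omega)
    | succ d ih =>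
      intro t htE htd
      by_cases h : t < N
      · have ht1 : t + 1 < N := by
          rcases hN with ⟨n, hn⟩
          rcases htE with ⟨s, hs⟩
          omega
        have := hB (t + 1) (by omega) ht1
        have e : t + 1 - 1 = t := by omega
        rw [e] at this
        rw [this]
        exact ih (t + 2) (by rcases htE with ⟨s, hs⟩; exact ⟨s + 1, by omega⟩) (by omega)
      · exact hC t h
  funext j
  have hj : u j = u' (j : ℕ) := by
    simp only [hu']
    rw [dif_pos j.isLt]
  rcases Nat.even_or_odd (j : ℕ) with hE | hO
  · rw [Pi.zero_apply, hj]
    exact heven N _ hE (by omega)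
  · rcases hO with ⟨t, ht⟩
    rw [Pi.zero_apply, hj, ht]
    exact hodd t

lemma exists_pair (hN : Even N) {u : Fin N → ZMod p} (hu : u ≠ 0) :
    ∃ w : Fin N → ZMod p, triForm p N u w ≠ 0 := by
  by_contra h
  push_neg at h
  exact hu (nondeg hN fun k => h _)

lemma move_of_pair [Fact p.Prime] {u v : Fin N → ZMod p} (h : triForm p N u v ≠ 0) :
    ∃ s ∈ sp p N, s u = v := by
  refine ⟨tv p (v - u) (-(triForm p N u v)⁻¹), tv_mem_sp _ _, ?_⟩
  rw [tv_apply, triForm_sub_right, triForm_self, sub_zero]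
  have : -(triForm p N u v)⁻¹ * triForm p N u v = -1 := by
    field_simp
  rw [this]
  module

/-- transitivity of the full symplectic group on nonzero vectors -/
lemma sp_trans [Fact p.Prime] (hN : Even N) {u v : Fin N → ZMod p}
    (hu : u ≠ 0) (hv : v ≠ 0) : ∃ s ∈ sp p N, s u = v := by
  by_cases huv : triForm p N u v ≠ 0
  · exact move_of_pair huv
  push_neg at huv
  obtain ⟨w1, hw1⟩ := exists_pair hN hu
  obtain ⟨w2, hw2⟩ := exists_pair hN hv
  have hw : ∃ w, triForm p N u w ≠ 0 ∧ triForm p N v w ≠ 0 := by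
    by_cases h1 : triForm p N v w1 ≠ 0
    · exact ⟨w1, hw1, h1⟩
    by_cases h2 : triForm p N u w2 ≠ 0
    · exact ⟨w2, h2, hw2⟩
    push_neg at h1 h2
    refine ⟨w1 + w2, ?_, ?_⟩
    · rw [triForm_add_right, h2, add_zero]; exact hw1
    · rw [triForm_add_right, h1, zero_add]; exact hw2
  obtain ⟨w, hwu, hwv⟩ := hw
  obtain ⟨s1, hs1, hs1u⟩ := move_of_pair hwu
  have hwv' : triForm p N w v ≠ 0 := by
    rw [triForm_skew]
    simpa using hwv
  obtain ⟨s2, hs2, hs2w⟩ := move_of_pair hwv'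
  refine ⟨s2 * s1, mul_mem hs2 hs1, ?_⟩
  show s2 (s1 u) = v
  rw [hs1u, hs2w]

end TGS
namespace TGS

variable {p N : ℕ}

lemma neZero_of_prime [hp : Fact p.Prime] : NeZero p := ⟨hp.out.ne_zero⟩

lemma plane_trans_aux [Fact p.Prime] (hN2 : 2 ≤ N) (a b : ZMod p) (hb : b ≠ 0) :
    ∃ h ∈ Gp p N,
      h (a • (Pi.single (⟨0, by omega⟩ : Fin N) (1 : ZMod p) : Fin N → ZMod p)
          + b • (Pi.single (⟨1, by omega⟩ : Fin N) (1 : ZMod p) : Fin N → ZMod p))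
        = (Pi.single (⟨0, by omega⟩ : Fin N) (1 : ZMod p) : Fin N → ZMod p) := by
  haveI : NeZero p := neZero_of_prime
  set d0 : Fin N → ZMod p := Pi.single (⟨0, by omega⟩ : Fin N) (1 : ZMod p) with hd0
  set d1 : Fin N → ZMod p := Pi.single (⟨1, by omega⟩ : Fin N) (1 : ZMod p) with hd1
  set l : ZMod p := (1 - a) * b⁻¹ with hl
  refine ⟨tv p d1 b * tv p d0 l, mul_mem (tv_single_mem _ _) (tv_single_mem _ _), ?_⟩
  have h1 : tv p d0 l (a • d0 + b • d1) = d0 + b • d1 := by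
    rw [tv_apply]
    have hφ : triForm p N (a • d0 + b • d1) d0 = -b := by
      rw [triForm_add_left, triForm_smul_left, triForm_smul_left, hd0, hd1,
        triForm_single_single, triForm_single_single]
      norm_num
    rw [hφ]
    have : l * -b = -(1 - a) := by
      rw [hl]
      field_simp
    rw [this]
    module
  have h2 : tv p d1 b (d0 + b • d1) = d0 := by
    rw [tv_apply]
    have hφ : triForm p N (d0 + b • d1) d1 = 1 := by
      rw [triForm_add_left, triForm_smul_left, hd0, hd1,
        triForm_single_single, triForm_single_single]
      norm_num
    rw [hφ]
    module
  show tv p d1 b (tv p d0 l (a • d0 + b • d1)) = d0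
  rw [h1, h2]

lemma plane_trans [Fact p.Prime] (hN2 : 2 ≤ N) (a b : ZMod p) (hab : ¬(a = 0 ∧ b = 0)) :
    ∃ h ∈ Gp p N,
      h (a • (Pi.single (⟨0, by omega⟩ : Fin N) (1 : ZMod p) : Fin N → ZMod p)
          + b • (Pi.single (⟨1, by omega⟩ : Fin N) (1 : ZMod p) : Fin N → ZMod p))
        = (Pi.single (⟨0, by omega⟩ : Fin N) (1 : ZMod p) : Fin N → ZMod p) := by
  haveI : NeZero p := neZero_of_prime
  by_cases hb : b = 0
  · subst hb
    have ha : a ≠ 0 := by tauto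
    set d0 : Fin N → ZMod p := Pi.single (⟨0, by omega⟩ : Fin N) (1 : ZMod p) with hd0
    set d1 : Fin N → ZMod p := Pi.single (⟨1, by omega⟩ : Fin N) (1 : ZMod p) with hd1
    obtain ⟨h', hh'G, hh'⟩ := plane_trans_aux hN2 a 1 (p := p) one_ne_zero
    refine ⟨h' * tv p d1 (-a⁻¹), mul_mem hh'G (tv_single_mem _ _), ?_⟩
    have hstep : tv p d1 (-a⁻¹) (a • d0 + (0 : ZMod p) • d1) = a • d0 + (1 : ZMod p) • d1 := by
      rw [tv_apply]
      have hφ : triForm p N (a • d0 + (0 : ZMod p) • d1) d1 = a := by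
        rw [triForm_add_left, triForm_smul_left, triForm_smul_left, hd0, hd1,
          triForm_single_single, triForm_single_single]
        norm_num
      rw [hφ]
      have : -a⁻¹ * a = -1 := by field_simp
      rw [this]
      module
    show h' (tv p d1 (-a⁻¹) (a • d0 + (0 : ZMod p) • d1)) = d0
    rw [hstep]
    exact hh'
  · exact plane_trans_aux hN2 a b hb

end TGS
namespace TGS

variable {p : ℕ}

lemma base_case [Fact p.Prime] : Gp p 2 = sp p 2 := by
  apply le_antisymm Gp_le_sp
  intro g hg
  haveI : NeZero p := neZero_of_prime
  set d0 : Fin 2 → ZMod p := Pi.single (⟨0, by omega⟩ : Fin 2) (1 : ZMod p) with hd0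
  set d1 : Fin 2 → ZMod p := Pi.single (⟨1, by omega⟩ : Fin 2) (1 : ZMod p) with hd1
  have hdec : ∀ v : Fin 2 → ZMod p,
      v = v ⟨0, by omega⟩ • d0 + v ⟨1, by omega⟩ • d1 := by
    intro v
    funext j
    rcases j with ⟨jv, hj⟩
    interval_cases jv <;>
      simp [hd0, hd1, Pi.single_apply, Fin.ext_iff]
  have hφ01 : triForm p 2 d0 d1 = 1 := by
    rw [hd0, hd1, triForm_single_single]
    norm_num
  have hgd0 : g d0 ≠ 0 := by
    intro h
    have h2 : d0 = 0 := g.map_eq_zero_iff.mp h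
    have h3 := congrFun h2 ⟨0, by omega⟩
    rw [hd0] at h3
    simp at h3
  have hab : ¬((g d0) ⟨0, by omega⟩ = 0 ∧ (g d0) ⟨1, by omega⟩ = 0) := by
    rintro ⟨h1, h2⟩
    apply hgd0
    rw [hdec (g d0), h1, h2]
    module
  obtain ⟨h1, h1G, h1e⟩ := plane_trans (p := p) (N := 2) (by omega)
    ((g d0) ⟨0, by omega⟩) ((g d0) ⟨1, by omega⟩) hab
  set g1 := h1 * g with hg1
  have hg1sp : g1 ∈ sp p 2 := mul_mem (Gp_le_sp h1G) hg
  have hg1d0 : g1 d0 = d0 := by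
    show h1 (g d0) = d0
    rw [hdec (g d0)]
    exact h1e
  set w := g1 d1 with hw
  have hw1 : w ⟨1, by omega⟩ = 1 := by
    have h2 : triForm p 2 (g1 d0) (g1 d1) = 1 := by
      rw [hg1sp d0 d1, hφ01]
    rw [hg1d0, ← hw] at h2
    rw [hdec w, triForm_add_right, triForm_smul_right, triForm_smul_right, hd0, hd1,
      triForm_single_single, triForm_single_single] at h2
    norm_num at h2
    exact h2
  set c := w ⟨0, by omega⟩ with hc
  set g2 := tv p d0 (-c) with hg2
  have hg2G : g2 ∈ Gp p 2 := tv_single_mem _ _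
  have hg2d0 : g2 d0 = d0 := by
    rw [hg2, tv_apply, triForm_self]
    module
  have hg2w : g2 w = d1 := by
    rw [hg2, tv_apply]
    have hφ : triForm p 2 w d0 = -1 := by
      rw [hdec w, hw1, ← hc, triForm_add_left, triForm_smul_left, triForm_smul_left,
        hd0, hd1, triForm_single_single, triForm_single_single]
      norm_num
    rw [hφ]
    have hrw : w = c • d0 + d1 := by
      nth_rewrite 1 [hdec w]
      rw [hw1, ← hc]
      module
    rw [hrw]
    module
  have hfin : g2 * g1 = 1 := by
    apply LinearEquiv.ext
    intro v
    show g2 (g1 v) = v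
    nth_rewrite 1 [hdec v]
    rw [map_add, map_smul, map_smul, map_add, map_smul, map_smul, hg1d0, hg2d0,
      ← hw, hg2w]
    exact (hdec v).symm
  have hg1inv : g1 = g2⁻¹ := eq_inv_of_mul_eq_one_right hfin
  have hgeq : g = h1⁻¹ * g1 := by
    rw [hg1]
    group
  rw [hgeq, hg1inv]
  exact mul_mem (inv_mem h1G) (inv_mem hg2G)

end TGS
namespace TGS

variable {p n : ℕ}

/-- embedding of the perp of the first hyperbolic-like plane: `f₀ ↦ e₀ + e₂`, `f_j ↦ e_{j+2}` -/
def emb (x : Fin n → ZMod p) : Fin (n + 2) → ZMod p := fun k =>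
  if h : 2 ≤ (k : ℕ) then x ⟨(k : ℕ) - 2, by have := k.isLt; omega⟩
  else if h0 : (k : ℕ) = 0 then (if hn : 0 < n then x ⟨0, hn⟩ else 0) else 0

def projV (v : Fin (n + 2) → ZMod p) : Fin n → ZMod p := fun j =>
  v ⟨(j : ℕ) + 2, by have := j.isLt; omega⟩

lemma emb_apply_ge (x : Fin n → ZMod p) (k : Fin (n + 2)) (hk : 2 ≤ (k : ℕ)) :
    emb x k = x ⟨(k : ℕ) - 2, by have := k.isLt; omega⟩ := by
  simp only [emb]
  rw [dif_pos hk]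

lemma emb_apply_one (x : Fin n → ZMod p) (k : Fin (n + 2)) (hk : (k : ℕ) = 1) :
    emb x k = 0 := by
  simp only [emb]
  rw [dif_neg (by omega), dif_neg (by omega)]

lemma emb_apply_zero (hn : 0 < n) (x : Fin n → ZMod p) (k : Fin (n + 2)) (hk : (k : ℕ) = 0) :
    emb x k = x ⟨0, hn⟩ := by
  simp only [emb]
  rw [dif_neg (by omega), dif_pos hk, dif_pos hn]

lemma projV_apply (v : Fin (n + 2) → ZMod p) (j : Fin n) :
    projV v j = v ⟨(j : ℕ) + 2, by have := j.isLt; omega⟩ := rfl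

lemma projV_emb (x : Fin n → ZMod p) : projV (emb x) = x := by
  funext j
  rw [projV_apply, emb_apply_ge _ _ (by simp)]
  exact congrArg x (Fin.ext (by simp))

lemma emb_add (x y : Fin n → ZMod p) : emb (x + y) = emb x + emb y := by
  funext k
  simp only [emb, Pi.add_apply]
  split_ifs <;> simp

lemma emb_zero : emb (0 : Fin n → ZMod p) = 0 := by
  funext k
  simp only [emb, Pi.zero_apply]
  split_ifs <;> simp

lemma emb_smul (c : ZMod p) (x : Fin n → ZMod p) : emb (c • x) = c • emb x := by
  funext k
  simp only [emb, Pi.smul_apply]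
  split_ifs <;> simp

lemma projV_add (x y : Fin (n + 2) → ZMod p) : projV (x + y) = projV x + projV y := rfl

lemma projV_smul (c : ZMod p) (x : Fin (n + 2) → ZMod p) : projV (c • x) = c • projV x := rfl

lemma emb_eq_zero_iff (x : Fin n → ZMod p) : emb x = 0 ↔ x = 0 := by
  constructor
  · intro h
    rw [← projV_emb x, h]
    rfl
  · intro h; rw [h, emb_zero]

/-- decomposition of a vector into plane part and perp part -/
lemma vec_decomp (hn : 0 < n) (v : Fin (n + 2) → ZMod p) :
    v = (v ⟨0, by omega⟩ - v ⟨2, by omega⟩) • (Pi.single (⟨0, by omega⟩ : Fin (n+2)) (1 : ZMod p) : Fin (n+2) → ZMod p)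
      + v ⟨1, by omega⟩ • (Pi.single (⟨1, by omega⟩ : Fin (n+2)) (1 : ZMod p) : Fin (n+2) → ZMod p)
      + emb (projV v) := by
  funext k
  simp only [Pi.add_apply, Pi.smul_apply, smul_eq_mul]
  rcases Nat.lt_or_ge (k : ℕ) 2 with hk | hk
  · rcases k with ⟨kv, hkv⟩
    interval_cases kv
    · rw [emb_apply_zero hn _ _ (by simp), projV_apply]
      simp [Pi.single_apply, Fin.ext_iff]
    · rw [emb_apply_one _ _ (by simp)]
      simp [Pi.single_apply, Fin.ext_iff]
  · rw [emb_apply_ge _ _ hk, projV_apply]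
    have h1 : (Pi.single (⟨0, by omega⟩ : Fin (n+2)) (1 : ZMod p) : Fin (n+2) → ZMod p) k = 0 := by
      rw [Pi.single_apply, if_neg]
      intro hc
      rw [Fin.ext_iff] at hc
      simp only [Fin.val_mk] at hc
      omega
    have h2 : (Pi.single (⟨1, by omega⟩ : Fin (n+2)) (1 : ZMod p) : Fin (n+2) → ZMod p) k = 0 := by
      rw [Pi.single_apply, if_neg]
      intro hc
      rw [Fin.ext_iff] at hc
      simp at hc
      omega
    rw [h1, h2]
    have h3 : v ⟨(k:ℕ) - 2 + 2, by have := k.isLt; omega⟩ = v k :=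
      congrArg v (Fin.ext (by simp; omega))
    rw [h3]
    ring

section sums

variable {α : Type*} {N : ℕ}

lemma triForm_sum_left (s : Finset α) (f : α → (Fin N → ZMod p)) (y : Fin N → ZMod p) :
    triForm p N (∑ i ∈ s, f i) y = ∑ i ∈ s, triForm p N (f i) y := by
  induction s using Finset.cons_induction with
  | empty => simp [triForm_zero_left]
  | cons a s ha ih => rw [Finset.sum_cons, triForm_add_left, ih, Finset.sum_cons]

lemma triForm_sum_right (s : Finset α) (x : Fin N → ZMod p) (f : α → (Fin N → ZMod p)) :
    triForm p N x (∑ i ∈ s, f i) = ∑ i ∈ s, triForm p N x (f i) := by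
  induction s using Finset.cons_induction with
  | empty => simp [triForm_zero_right]
  | cons a s ha ih => rw [Finset.sum_cons, triForm_add_right, ih, Finset.sum_cons]

end sums

lemma emb_single_zero (hn : 0 < n) (c : ZMod p) :
    emb (Pi.single (⟨0, hn⟩ : Fin n) c)
      = (Pi.single (⟨0, by omega⟩ : Fin (n+2)) c : Fin (n+2) → ZMod p)
        + (Pi.single (⟨2, by omega⟩ : Fin (n+2)) c : Fin (n+2) → ZMod p) := by
  funext k
  simp only [emb, Pi.add_apply, Pi.single_apply, Fin.ext_iff, Fin.val_mk]
  split_ifs <;> first | rfl | omega | simp | (exfalso; omega)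

lemma emb_single_pos (iv : ℕ) (hi : iv < n) (hpos : 0 < iv) (c : ZMod p) :
    emb (Pi.single (⟨iv, hi⟩ : Fin n) c)
      = (Pi.single (⟨iv + 2, by omega⟩ : Fin (n+2)) c : Fin (n+2) → ZMod p) := by
  funext k
  simp only [emb, Pi.single_apply, Fin.ext_iff, Fin.val_mk]
  split_ifs <;> first | rfl | omega | simp | (exfalso; omega)

lemma emb_single_pair (iv jv : ℕ) (hi : iv < n) (hj : jv < n) (c d : ZMod p) :
    triForm p (n+2) (emb (Pi.single (⟨iv, hi⟩ : Fin n) c)) (emb (Pi.single (⟨jv, hj⟩ : Fin n) d))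
      = triForm p n (Pi.single (⟨iv, hi⟩ : Fin n) c) (Pi.single (⟨jv, hj⟩ : Fin n) d) := by
  have hn : 0 < n := by omega
  rw [triForm_single_single]
  rcases Nat.eq_zero_or_pos iv with hiz | hip
  · subst hiz
    rcases Nat.eq_zero_or_pos jv with hjz | hjp
    · subst hjz
      rw [emb_single_zero hn, emb_single_zero hn, triForm_add_left, triForm_add_right,
        triForm_add_right, triForm_single_single, triForm_single_single,
        triForm_single_single, triForm_single_single]
      norm_num
    · rw [emb_single_zero hn, emb_single_pos jv hj hjp, triForm_add_left,
        triForm_single_single, triForm_single_single]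
      split_ifs <;> first | contradiction | omega | ring
  · rcases Nat.eq_zero_or_pos jv with hjz | hjp
    · subst hjz
      rw [emb_single_pos iv hi hip, emb_single_zero hn, triForm_add_right,
        triForm_single_single, triForm_single_single]
      split_ifs <;> first | contradiction | omega | ring
    · rw [emb_single_pos iv hi hip, emb_single_pos jv hj hjp, triForm_single_single]
      split_ifs <;> first | contradiction | omega | ring

lemma emb_sum {α : Type*} (s : Finset α) (f : α → (Fin n → ZMod p)) :
    emb (∑ i ∈ s, f i) = ∑ i ∈ s, emb (f i) := by
  induction s using Finset.cons_induction with
  | empty => simp [emb_zero]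
  | cons a s ha ih => rw [Finset.sum_cons, emb_add, ih, Finset.sum_cons]

/-- the embedding is isometric -/
lemma triForm_emb (x y : Fin n → ZMod p) :
    triForm p (n + 2) (emb x) (emb y) = triForm p n x y := by
  conv_rhs => rw [← Finset.univ_sum_single x, ← Finset.univ_sum_single y]
  conv_lhs => rw [← Finset.univ_sum_single x, ← Finset.univ_sum_single y]
  rw [emb_sum, emb_sum, triForm_sum_left, triForm_sum_left]
  apply Finset.sum_congr rfl
  intro i _
  rw [triForm_sum_right, triForm_sum_right]
  apply Finset.sum_congr rfl
  intro j _
  rcases i with ⟨iv, hi⟩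
  rcases j with ⟨jv, hj⟩
  exact emb_single_pair iv jv hi hj _ _

end TGS
namespace TGS

variable {p n : ℕ}

lemma decomp_c0 (hn : 0 < n) (a b : ZMod p) (z : Fin n → ZMod p) :
    (a • (Pi.single (⟨0, by omega⟩ : Fin (n+2)) (1:ZMod p) : Fin (n+2) → ZMod p)
      + b • (Pi.single (⟨1, by omega⟩ : Fin (n+2)) (1:ZMod p) : Fin (n+2) → ZMod p)
      + emb z) ⟨0, by omega⟩
    - (a • (Pi.single (⟨0, by omega⟩ : Fin (n+2)) (1:ZMod p) : Fin (n+2) → ZMod p)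
      + b • (Pi.single (⟨1, by omega⟩ : Fin (n+2)) (1:ZMod p) : Fin (n+2) → ZMod p)
      + emb z) ⟨2, by omega⟩ = a := by
  simp only [Pi.add_apply, Pi.smul_apply, smul_eq_mul, Pi.single_apply, Fin.ext_iff, Fin.val_mk]
  rw [emb_apply_zero hn _ _ rfl, emb_apply_ge _ _ (by norm_num)]
  norm_num

lemma decomp_c1 (hn : 0 < n) (a b : ZMod p) (z : Fin n → ZMod p) :
    (a • (Pi.single (⟨0, by omega⟩ : Fin (n+2)) (1:ZMod p) : Fin (n+2) → ZMod p)
      + b • (Pi.single (⟨1, by omega⟩ : Fin (n+2)) (1:ZMod p) : Fin (n+2) → ZMod p)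
      + emb z) ⟨1, by omega⟩ = b := by
  simp only [Pi.add_apply, Pi.smul_apply, smul_eq_mul, Pi.single_apply, Fin.ext_iff, Fin.val_mk]
  rw [emb_apply_one _ _ rfl]
  norm_num

lemma decomp_proj (a b : ZMod p) (z : Fin n → ZMod p) :
    projV (a • (Pi.single (⟨0, by omega⟩ : Fin (n+2)) (1:ZMod p) : Fin (n+2) → ZMod p)
      + b • (Pi.single (⟨1, by omega⟩ : Fin (n+2)) (1:ZMod p) : Fin (n+2) → ZMod p)
      + emb z) = z := by
  funext j
  rw [projV_apply]
  simp only [Pi.add_apply, Pi.smul_apply, smul_eq_mul, Pi.single_apply, Fin.ext_iff, Fin.val_mk]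
  rw [emb_apply_ge _ _ (by simp)]
  have : z ⟨(j:ℕ) + 2 - 2, by have := j.isLt; omega⟩ = z j := congrArg z (Fin.ext (by simp))
  rw [this]
  have h1 : ¬((j:ℕ) + 2 = 0) := by omega
  have h2 : ¬((j:ℕ) + 2 = 1) := by omega
  rw [if_neg h1, if_neg h2]
  ring

/-- extension of an automorphism of the perp part by the identity on the plane -/
def extEquiv (hn : 0 < n) (h : (Fin n → ZMod p) ≃ₗ[ZMod p] (Fin n → ZMod p)) :
    (Fin (n+2) → ZMod p) ≃ₗ[ZMod p] (Fin (n+2) → ZMod p) where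
  toFun v := (v ⟨0, by omega⟩ - v ⟨2, by omega⟩)
        • (Pi.single (⟨0, by omega⟩ : Fin (n+2)) (1:ZMod p) : Fin (n+2) → ZMod p)
      + v ⟨1, by omega⟩
        • (Pi.single (⟨1, by omega⟩ : Fin (n+2)) (1:ZMod p) : Fin (n+2) → ZMod p)
      + emb (h (projV v))
  map_add' u v := by
    rw [projV_add, map_add, emb_add]
    simp only [Pi.add_apply]
    module
  map_smul' c v := by
    simp only [RingHom.id_apply]
    rw [projV_smul, map_smul, emb_smul]
    simp only [Pi.smul_apply, smul_eq_mul]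
    module
  invFun v := (v ⟨0, by omega⟩ - v ⟨2, by omega⟩)
        • (Pi.single (⟨0, by omega⟩ : Fin (n+2)) (1:ZMod p) : Fin (n+2) → ZMod p)
      + v ⟨1, by omega⟩
        • (Pi.single (⟨1, by omega⟩ : Fin (n+2)) (1:ZMod p) : Fin (n+2) → ZMod p)
      + emb (h.symm (projV v))
  left_inv v := by
    dsimp only
    rw [decomp_c0 hn, decomp_c1 hn, decomp_proj, h.symm_apply_apply]
    exact (vec_decomp hn v).symm
  right_inv v := by
    dsimp only
    rw [decomp_c0 hn, decomp_c1 hn, decomp_proj, h.apply_symm_apply]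
    exact (vec_decomp hn v).symm

lemma extEquiv_apply (hn : 0 < n) (h : (Fin n → ZMod p) ≃ₗ[ZMod p] (Fin n → ZMod p))
    (v : Fin (n+2) → ZMod p) :
    extEquiv hn h v = (v ⟨0, by omega⟩ - v ⟨2, by omega⟩)
        • (Pi.single (⟨0, by omega⟩ : Fin (n+2)) (1:ZMod p) : Fin (n+2) → ZMod p)
      + v ⟨1, by omega⟩
        • (Pi.single (⟨1, by omega⟩ : Fin (n+2)) (1:ZMod p) : Fin (n+2) → ZMod p)
      + emb (h (projV v)) := rfl

lemma extEquiv_one (hn : 0 < n) : extEquiv hn (1 : (Fin n → ZMod p) ≃ₗ[ZMod p] (Fin n → ZMod p)) = 1 := by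
  apply LinearEquiv.ext
  intro v
  rw [extEquiv_apply]
  show _ + emb (projV v) = v
  exact (vec_decomp hn v).symm

lemma extEquiv_mul (hn : 0 < n) (g h : (Fin n → ZMod p) ≃ₗ[ZMod p] (Fin n → ZMod p)) :
    extEquiv hn (g * h) = extEquiv hn g * extEquiv hn h := by
  apply LinearEquiv.ext
  intro v
  show extEquiv hn (g * h) v = extEquiv hn g (extEquiv hn h v)
  rw [extEquiv_apply, extEquiv_apply, extEquiv_apply, decomp_c0 hn, decomp_c1 hn, decomp_proj]
  rfl

lemma extEquiv_inv (hn : 0 < n) (h : (Fin n → ZMod p) ≃ₗ[ZMod p] (Fin n → ZMod p)) :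
    extEquiv hn h⁻¹ = (extEquiv hn h)⁻¹ := by
  exact eq_inv_of_mul_eq_one_right (by rw [← extEquiv_mul hn, mul_inv_cancel, extEquiv_one hn])

lemma triForm_d0_emb (z : Fin n → ZMod p) :
    triForm p (n+2) (Pi.single (⟨0, by omega⟩ : Fin (n+2)) (1:ZMod p)) (emb z) = 0 := by
  rw [triForm_single_left]
  rw [dif_pos (by simp only [Fin.val_mk]; omega : (((⟨0, by omega⟩ : Fin (n+2)) : ℕ)) + 1 < n + 2)]
  rw [emb_apply_one _ _ (by simp), if_neg (by simp)]
  ring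

lemma triForm_d1_emb (hn : 0 < n) (z : Fin n → ZMod p) :
    triForm p (n+2) (Pi.single (⟨1, by omega⟩ : Fin (n+2)) (1:ZMod p)) (emb z) = 0 := by
  rw [triForm_single_left]
  rw [dif_pos (by simp only [Fin.val_mk]; omega : (((⟨1, by omega⟩ : Fin (n+2)) : ℕ)) + 1 < n + 2)]
  rw [if_pos (by simp : 0 < ((⟨1, by omega⟩ : Fin (n+2)) : ℕ))]
  rw [emb_apply_ge _ _ (by simp), emb_apply_zero hn _ _ (by simp)]
  have : z ⟨((⟨1, by omega⟩ : Fin (n+2)) : ℕ) + 1 - 2, by simp only [Fin.val_mk]; omega⟩ = z ⟨0, hn⟩ :=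
    congrArg z (Fin.ext (by simp))
  rw [this]
  ring

lemma triForm_emb_d0 (z : Fin n → ZMod p) :
    triForm p (n+2) (emb z) (Pi.single (⟨0, by omega⟩ : Fin (n+2)) (1:ZMod p)) = 0 := by
  rw [triForm_skew, triForm_d0_emb, neg_zero]

lemma triForm_emb_d1 (hn : 0 < n) (z : Fin n → ZMod p) :
    triForm p (n+2) (emb z) (Pi.single (⟨1, by omega⟩ : Fin (n+2)) (1:ZMod p)) = 0 := by
  rw [triForm_skew, triForm_d1_emb hn, neg_zero]

/-- the form through the plane/perp decomposition -/
lemma phi_decomp (hn : 0 < n) (v w : Fin (n+2) → ZMod p) :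
    triForm p (n+2) v w
      = (v ⟨0, by omega⟩ - v ⟨2, by omega⟩) * w ⟨1, by omega⟩
        - (w ⟨0, by omega⟩ - w ⟨2, by omega⟩) * v ⟨1, by omega⟩
        + triForm p n (projV v) (projV w) := by
  have h00 : triForm p (n+2) (Pi.single (⟨0, by omega⟩ : Fin (n+2)) (1:ZMod p))
      (Pi.single (⟨0, by omega⟩ : Fin (n+2)) (1:ZMod p)) = 0 := triForm_self _
  have h11 : triForm p (n+2) (Pi.single (⟨1, by omega⟩ : Fin (n+2)) (1:ZMod p))
      (Pi.single (⟨1, by omega⟩ : Fin (n+2)) (1:ZMod p)) = 0 := triForm_self _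
  have h01 : triForm p (n+2) (Pi.single (⟨0, by omega⟩ : Fin (n+2)) (1:ZMod p))
      (Pi.single (⟨1, by omega⟩ : Fin (n+2)) (1:ZMod p)) = 1 := by
    rw [triForm_single_single]; norm_num
  have h10 : triForm p (n+2) (Pi.single (⟨1, by omega⟩ : Fin (n+2)) (1:ZMod p))
      (Pi.single (⟨0, by omega⟩ : Fin (n+2)) (1:ZMod p)) = -1 := by
    rw [triForm_single_single]; norm_num
  nth_rewrite 1 [vec_decomp hn v, vec_decomp hn w]
  simp only [triForm_add_left, triForm_add_right, triForm_smul_left, triForm_smul_right]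
  simp only [h00, h11, h01, h10, triForm_d0_emb, triForm_d1_emb hn, triForm_emb_d0,
    triForm_emb_d1 hn, triForm_emb]
  ring

/-- the extension of an isometry is an isometry -/
lemma extEquiv_sp (hn : 0 < n) {h : (Fin n → ZMod p) ≃ₗ[ZMod p] (Fin n → ZMod p)}
    (hh : h ∈ sp p n) : extEquiv hn h ∈ sp p (n+2) := by
  intro a b
  rw [phi_decomp hn (extEquiv hn h a) (extEquiv hn h b), extEquiv_apply, extEquiv_apply,
    decomp_c0 hn, decomp_c0 hn, decomp_c1 hn, decomp_c1 hn, decomp_proj, decomp_proj,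
    hh (projV a) (projV b), phi_decomp hn a b]

lemma emb_sub (x y : Fin n → ZMod p) : emb (x - y) = emb x - emb y := by
  have h := emb_add (x - y) y
  rw [sub_add_cancel] at h
  rw [h]
  module

/-- the extension of a perp transvection is the corresponding transvection -/
lemma extEquiv_tv (hn : 0 < n) (f : Fin n → ZMod p) (l : ZMod p) :
    extEquiv hn (tv p f l) = tv p (emb f) l := by
  apply LinearEquiv.ext
  intro v
  rw [extEquiv_apply, tv_apply, tv_apply]
  have hφ : triForm p (n+2) v (emb f) = triForm p n (projV v) f := by
    rw [phi_decomp hn v (emb f), projV_emb]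
    rw [emb_apply_one _ _ (by simp)]
    rcases Nat.eq_zero_or_pos n with hz | hz
    · exact absurd hn (by omega)
    · rw [emb_apply_zero hz _ _ (by simp), emb_apply_ge _ _ (by simp)]
      have : f ⟨((⟨2, by omega⟩ : Fin (n+2)) : ℕ) - 2, by simp only [Fin.val_mk]; omega⟩ = f ⟨0, hz⟩ :=
        congrArg f (Fin.ext (by simp))
      rw [this]
      ring
  rw [hφ, emb_sub, emb_smul]
  set s := l * triForm p n (projV v) f with hs
  nth_rewrite 5 [vec_decomp hn v]
  module

end TGS

namespace TGS

variable {p n : ℕ}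

lemma two_ne_zero_zmod [Fact p.Prime] (hp2 : p ≠ 2) : (2 : ZMod p) ≠ 0 := by
  intro h
  have h2 : ((2 : ℕ) : ZMod p) = 0 := by norm_cast
  rw [ZMod.natCast_eq_zero_iff] at h2
  exact hp2 ((Nat.prime_dvd_prime_iff_eq Fact.out Nat.prime_two).mp h2)

lemma tv13 {N : ℕ} (hN4 : 4 ≤ N) [Fact p.Prime] (hp2 : p ≠ 2) :
    inW p N ((Pi.single (⟨0, by omega⟩ : Fin N) (1 : ZMod p) : Fin N → ZMod p)
      + (Pi.single (⟨2, by omega⟩ : Fin N) (1 : ZMod p) : Fin N → ZMod p)) := by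
  haveI : NeZero p := neZero_of_prime
  have htwo : (2 : ZMod p) ≠ 0 := two_ne_zero_zmod hp2
  set d0 : Fin N → ZMod p := Pi.single (⟨0, by omega⟩ : Fin N) (1 : ZMod p) with hd0
  set d1 : Fin N → ZMod p := Pi.single (⟨1, by omega⟩ : Fin N) (1 : ZMod p) with hd1
  set d2 : Fin N → ZMod p := Pi.single (⟨2, by omega⟩ : Fin N) (1 : ZMod p) with hd2
  set d3 : Fin N → ZMod p := Pi.single (⟨3, by omega⟩ : Fin N) (1 : ZMod p) with hd3
  have hs1 : tv p d1 1 d2 = d1 + d2 := by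
    rw [tv_apply]
    have hφ : triForm p N d2 d1 = -1 := by
      rw [hd1, hd2, triForm_single_single]; norm_num
    rw [hφ]; module
  have hs2 : tv p d0 2 (d1 + d2) = (2 : ZMod p) • d0 + d1 + d2 := by
    rw [tv_apply]
    have hφ : triForm p N (d1 + d2) d0 = -1 := by
      rw [triForm_add_left, hd0, hd1, hd2, triForm_single_single, triForm_single_single]
      norm_num
    rw [hφ]; module
  have hs3 : tv p d1 1 ((2 : ZMod p) • d0 + d1 + d2) = (2 : ZMod p) • d0 + d2 := by
    rw [tv_apply]
    have hφ : triForm p N ((2 : ZMod p) • d0 + d1 + d2) d1 = 1 := by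
      rw [triForm_add_left, triForm_add_left, triForm_smul_left, hd0, hd1, hd2,
        triForm_single_single, triForm_single_single, triForm_single_single]
      norm_num
    rw [hφ]; module
  have hs4 : tv p d3 1 ((2 : ZMod p) • d0 + d2) = (2 : ZMod p) • d0 + d2 - d3 := by
    rw [tv_apply]
    have hφ : triForm p N ((2 : ZMod p) • d0 + d2) d3 = 1 := by
      rw [triForm_add_left, triForm_smul_left, hd0, hd2, hd3,
        triForm_single_single, triForm_single_single]
      norm_num
    rw [hφ]; module
  have hs5 : tv p d2 (-1) ((2 : ZMod p) • d0 + d2 - d3) = (2 : ZMod p) • d0 + (2 : ZMod p) • d2 - d3 := by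
    rw [tv_apply]
    have hφ : triForm p N ((2 : ZMod p) • d0 + d2 - d3) d2 = 1 := by
      rw [triForm_sub_left, triForm_add_left, triForm_smul_left, hd0, hd2, hd3,
        triForm_single_single, triForm_single_single, triForm_single_single]
      norm_num
    rw [hφ]; module
  have hs6 : tv p d3 (-(2⁻¹)) ((2 : ZMod p) • d0 + (2 : ZMod p) • d2 - d3) = (2 : ZMod p) • d0 + (2 : ZMod p) • d2 := by
    rw [tv_apply]
    have hφ : triForm p N ((2 : ZMod p) • d0 + (2 : ZMod p) • d2 - d3) d3 = 2 := by
      rw [triForm_sub_left, triForm_add_left, triForm_smul_left, triForm_smul_left,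
        hd0, hd2, hd3, triForm_single_single, triForm_single_single, triForm_single_single]
      norm_num
    rw [hφ]
    have hc : -(2 : ZMod p)⁻¹ * 2 = -1 := by
      field_simp
    rw [hc]; module
  set h := tv p d3 (-(2⁻¹)) * tv p d2 (-1) * tv p d3 1 * tv p d1 1 * tv p d0 2 * tv p d1 1
    with hh
  have hmem : h ∈ Gp p N := by
    rw [hh, hd0, hd1, hd2, hd3]
    exact mul_mem (mul_mem (mul_mem (mul_mem (mul_mem (tv_single_mem _ _) (tv_single_mem _ _))
      (tv_single_mem _ _)) (tv_single_mem _ _)) (tv_single_mem _ _)) (tv_single_mem _ _)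
  have happ : h d2 = (2 : ZMod p) • d0 + (2 : ZMod p) • d2 := by
    show tv p d3 (-(2⁻¹)) (tv p d2 (-1) (tv p d3 1 (tv p d1 1 (tv p d0 2 (tv p d1 1 d2))))) = _
    rw [hs1, hs2, hs3, hs4, hs5, hs6]
  have hW : inW p N (h d2) := inW_apply hmem (by rw [hd2]; exact inW_single _)
  rw [happ] at hW
  have hW2 := inW_smul hW (2 : ZMod p)⁻¹
  have hfin : (2 : ZMod p)⁻¹ • ((2 : ZMod p) • d0 + (2 : ZMod p) • d2) = d0 + d2 := by
    rw [smul_add, smul_smul, smul_smul, inv_mul_cancel₀ htwo, one_smul, one_smul]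
  rwa [hfin] at hW2

lemma extEquiv_maps_Gp [Fact p.Prime] (hp2 : p ≠ 2) (hn2 : 2 ≤ n)
    {h : (Fin n → ZMod p) ≃ₗ[ZMod p] (Fin n → ZMod p)} (hh : h ∈ Gp p n) :
    extEquiv (by omega : 0 < n) h ∈ Gp p (n + 2) := by
  haveI : NeZero p := neZero_of_prime
  induction hh using Subgroup.closure_induction with
  | mem x hx =>
    rw [genSet_eq] at hx
    obtain ⟨i, rfl⟩ := hx
    rw [extEquiv_tv]
    rcases i with ⟨iv, hiv⟩
    rcases Nat.eq_zero_or_pos iv with hz | hpos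
    · subst hz
      rw [emb_single_zero (by omega)]
      exact tv13 (by omega) hp2 1
    · rw [emb_single_pos iv hiv hpos]
      exact tv_single_mem _ 1
  | one =>
    rw [extEquiv_one]
    exact one_mem _
  | mul x y hx hy ihx ihy =>
    rw [extEquiv_mul]
    exact mul_mem ihx ihy
  | inv x hx ih =>
    rw [extEquiv_inv]
    exact inv_mem ih

end TGS
namespace TGS

variable {p n : ℕ}

lemma single_one_ne_zero [Fact p.Prime] {M : ℕ} (i : Fin M) :
    (Pi.single i (1 : ZMod p) : Fin M → ZMod p) ≠ 0 := by
  haveI : Fact (1 < p) := ⟨(Fact.out : p.Prime).one_lt⟩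
  intro h
  have := congrFun h i
  rw [Pi.single_eq_same] at this
  exact one_ne_zero this

lemma phi_d0_right (hn : 0 < n) (w : Fin (n+2) → ZMod p) :
    triForm p (n+2) (Pi.single (⟨0, by omega⟩ : Fin (n+2)) (1 : ZMod p)) w
      = w ⟨1, by omega⟩ := by
  rw [triForm_single_left]
  rw [dif_pos (by simp only [Fin.val_mk]; omega :
    (((⟨0, by omega⟩ : Fin (n+2)) : ℕ)) + 1 < n + 2), if_neg (by simp)]
  have : w ⟨((⟨0, by omega⟩ : Fin (n+2)) : ℕ) + 1, by simp only [Fin.val_mk]; omega⟩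
      = w ⟨1, by omega⟩ := congrArg w (Fin.ext (by simp))
  rw [this]
  ring

lemma phi_d1_right (hn : 0 < n) (w : Fin (n+2) → ZMod p) :
    triForm p (n+2) (Pi.single (⟨1, by omega⟩ : Fin (n+2)) (1 : ZMod p)) w
      = w ⟨2, by omega⟩ - w ⟨0, by omega⟩ := by
  rw [triForm_single_left]
  rw [dif_pos (by simp only [Fin.val_mk]; omega :
    (((⟨1, by omega⟩ : Fin (n+2)) : ℕ)) + 1 < n + 2), if_pos (by simp)]
  have h1 : w ⟨((⟨1, by omega⟩ : Fin (n+2)) : ℕ) + 1, by simp only [Fin.val_mk]; omega⟩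
      = w ⟨2, by omega⟩ := congrArg w (Fin.ext (by simp))
  have h2 : w ⟨((⟨1, by omega⟩ : Fin (n+2)) : ℕ) - 1,
      lt_of_le_of_lt (Nat.sub_le _ _) (Fin.isLt _)⟩
      = w ⟨0, by omega⟩ := congrArg w (Fin.ext (by simp))
  rw [h1, h2]
  ring

lemma extEquiv_emb (hn : 0 < n) (s : (Fin n → ZMod p) ≃ₗ[ZMod p] (Fin n → ZMod p))
    (z : Fin n → ZMod p) : extEquiv hn s (emb z) = emb (s z) := by
  rw [extEquiv_apply, projV_emb]
  rw [emb_apply_zero hn _ _ (by simp), emb_apply_ge _ _ (by simp), emb_apply_one _ _ (by simp)]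
  have : z ⟨((⟨2, by omega⟩ : Fin (n+2)) : ℕ) - 2, by simp only [Fin.val_mk]; omega⟩
      = z ⟨0, hn⟩ := congrArg z (Fin.ext (by simp))
  rw [this]
  module

lemma extEquiv_d0 (hn : 0 < n) (s : (Fin n → ZMod p) ≃ₗ[ZMod p] (Fin n → ZMod p)) :
    extEquiv hn s (Pi.single (⟨0, by omega⟩ : Fin (n+2)) (1 : ZMod p))
      = Pi.single (⟨0, by omega⟩ : Fin (n+2)) (1 : ZMod p) := by
  rw [extEquiv_apply]
  have hproj : projV (Pi.single (⟨0, by omega⟩ : Fin (n+2)) (1 : ZMod p) : Fin (n+2) → ZMod p)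
      = 0 := by
    funext j
    rw [projV_apply, Pi.single_apply, if_neg]
    · rfl
    · intro hc
      rw [Fin.ext_iff] at hc
      simp at hc
  rw [hproj, map_zero, emb_zero]
  have h0 : (Pi.single (⟨0, by omega⟩ : Fin (n+2)) (1 : ZMod p) : Fin (n+2) → ZMod p)
      ⟨0, by omega⟩ = 1 := by rw [Pi.single_apply, if_pos rfl]
  have h1 : (Pi.single (⟨0, by omega⟩ : Fin (n+2)) (1 : ZMod p) : Fin (n+2) → ZMod p)
      ⟨1, by omega⟩ = 0 := by
    rw [Pi.single_apply, if_neg]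
    intro hc; rw [Fin.ext_iff] at hc; simp at hc
  have h2 : (Pi.single (⟨0, by omega⟩ : Fin (n+2)) (1 : ZMod p) : Fin (n+2) → ZMod p)
      ⟨2, by omega⟩ = 0 := by
    rw [Pi.single_apply, if_neg]
    intro hc; rw [Fin.ext_iff] at hc; simp at hc
  rw [h0, h1, h2]
  module

/-- **Claim A**: the generated group acts transitively on nonzero vectors. -/
lemma claimA [Fact p.Prime] (hp2 : p ≠ 2) (hn2 : 2 ≤ n) (hneven : Even n)
    (IH : Gp p n = sp p n) {v : Fin (n+2) → ZMod p} (hv : v ≠ 0) :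
    ∃ h ∈ Gp p (n+2), h v = Pi.single (⟨0, by omega⟩ : Fin (n+2)) (1 : ZMod p) := by
  haveI : NeZero p := neZero_of_prime
  have hn0 : 0 < n := by omega
  set d0 : Fin (n+2) → ZMod p := Pi.single (⟨0, by omega⟩ : Fin (n+2)) (1 : ZMod p) with hd0
  set d1 : Fin (n+2) → ZMod p := Pi.single (⟨1, by omega⟩ : Fin (n+2)) (1 : ZMod p) with hd1
  set d2 : Fin (n+2) → ZMod p := Pi.single (⟨2, by omega⟩ : Fin (n+2)) (1 : ZMod p) with hd2
  set d3 : Fin (n+2) → ZMod p := Pi.single (⟨3, by omega⟩ : Fin (n+2)) (1 : ZMod p) with hd3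
  set f0 : Fin n → ZMod p := Pi.single (⟨0, hn0⟩ : Fin n) (1 : ZMod p) with hf0
  set u := projV v with hu_def
  set a := v ⟨0, by omega⟩ - v ⟨2, by omega⟩ with ha
  set b := v ⟨1, by omega⟩ with hb
  have hvdec : v = a • d0 + b • d1 + emb u := vec_decomp hn0 v
  by_cases hu : u = 0
  · have hvrep : v = a • d0 + b • d1 := by
      rw [hvdec, hu, emb_zero, add_zero]
    have hab : ¬(a = 0 ∧ b = 0) := by
      rintro ⟨h1, h2⟩
      apply hv
      rw [hvrep, h1, h2]
      module
    obtain ⟨h, hG, he⟩ := plane_trans (p := p) (N := n+2) (by omega) a b hab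
    exact ⟨h, hG, by rw [hvrep]; exact he⟩
  · obtain ⟨s, hssp, hsu⟩ := sp_trans hneven hu (single_one_ne_zero (p := p) (⟨0, hn0⟩ : Fin n))
    have hsG : s ∈ Gp p n := by rw [IH]; exact hssp
    set E := extEquiv hn0 s with hE
    have hEG : E ∈ Gp p (n+2) := extEquiv_maps_Gp hp2 hn2 hsG
    have hEv : E v = (a + 1) • d0 + b • d1 + d2 := by
      rw [hE, extEquiv_apply, ← hu_def, hsu, emb_single_zero hn0]
      rw [← ha, ← hb, ← hd0, ← hd1, ← hd2]
      module
    by_cases hbz : b = 0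
    · -- b = 0 : v maps to (a+1) • d0 + d2
      by_cases ht : a + 1 = 1
      · -- the vector is exactly d0 + d2 = emb f0
        have hrw : (a + 1) • d0 + b • d1 + d2 = emb f0 := by
          rw [ht, hbz, emb_single_zero hn0, ← hd0, ← hd2]
          module
        have hf1lt : 1 < n := by omega
        obtain ⟨s2, hs2sp, hs2u⟩ := sp_trans hneven (single_one_ne_zero (p := p) (⟨0, hn0⟩ : Fin n))
          (single_one_ne_zero (p := p) (⟨1, hf1lt⟩ : Fin n))
        have hs2G : s2 ∈ Gp p n := by rw [IH]; exact hs2sp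
        set E2 := extEquiv hn0 s2 with hE2
        have hE2G : E2 ∈ Gp p (n+2) := extEquiv_maps_Gp hp2 hn2 hs2G
        have hE2v : E2 (emb f0) = d3 := by
          rw [hE2, extEquiv_emb, hf0, hs2u, emb_single_pos 1 hf1lt (by omega), hd3]
        have hc1 : tv p d2 1 d3 = d2 + d3 := by
          rw [tv_apply]
          have hφ : triForm p (n+2) d3 d2 = -1 := by
            rw [hd2, hd3, triForm_single_single]; norm_num
          rw [hφ]; module
        have hc2 : tv p d3 1 (d2 + d3) = d2 := by
          rw [tv_apply]
          have hφ : triForm p (n+2) (d2 + d3) d3 = 1 := by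
            rw [triForm_add_left, hd2, hd3, triForm_single_single, triForm_single_single]
            norm_num
          rw [hφ]; module
        have hc3 : tv p d1 1 d2 = d1 + d2 := by
          rw [tv_apply]
          have hφ : triForm p (n+2) d2 d1 = -1 := by
            rw [hd1, hd2, triForm_single_single]; norm_num
          rw [hφ]; module
        have hc4 : tv p d2 1 (d1 + d2) = d1 := by
          rw [tv_apply]
          have hφ : triForm p (n+2) (d1 + d2) d2 = 1 := by
            rw [triForm_add_left, hd1, hd2, triForm_single_single, triForm_single_single]
            norm_num
          rw [hφ]; module
        obtain ⟨h5, h5G, h5e⟩ := plane_trans (p := p) (N := n+2) (by omega) 0 1 (by simp)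
        have h5e' : h5 d1 = d0 := by
          have : (0 : ZMod p) • d0 + (1 : ZMod p) • d1 = d1 := by module
          rw [← this]
          exact h5e
        refine ⟨h5 * tv p d2 1 * tv p d1 1 * tv p d3 1 * tv p d2 1 * E2 * E,
          mul_mem (mul_mem (mul_mem (mul_mem (mul_mem (mul_mem h5G
            (by rw [hd2]; exact tv_single_mem _ _)) (by rw [hd1]; exact tv_single_mem _ _))
            (by rw [hd3]; exact tv_single_mem _ _)) (by rw [hd2]; exact tv_single_mem _ _))
            hE2G) hEG, ?_⟩
        show h5 (tv p d2 1 (tv p d1 1 (tv p d3 1 (tv p d2 1 (E2 (E v)))))) = d0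
        rw [hEv, hrw, hE2v, hc1, hc2, hc3, hc4, h5e']
      · -- a + 1 ≠ 1 : make the d1 coordinate nonzero, then clean up
        have hane : a ≠ 0 := by
          intro hc
          apply ht
          rw [hc, zero_add]
        have hstep1 : tv p d1 (-a⁻¹) ((a + 1) • d0 + b • d1 + d2)
            = (a + 1) • d0 + d1 + d2 := by
          rw [tv_apply]
          have hφ : triForm p (n+2) ((a + 1) • d0 + b • d1 + d2) d1 = a := by
            rw [triForm_add_left, triForm_add_left, triForm_smul_left, triForm_smul_left,
              hd0, hd1, hd2, triForm_single_single, triForm_single_single,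
              triForm_single_single]
            norm_num
          rw [hφ]
          have : -a⁻¹ * a = -1 := by field_simp
          rw [this, hbz]
          module
        have hstep2 : tv p d2 1 ((a + 1) • d0 + d1 + d2) = (a + 1) • d0 + d1 := by
          rw [tv_apply]
          have hφ : triForm p (n+2) ((a + 1) • d0 + d1 + d2) d2 = 1 := by
            rw [triForm_add_left, triForm_add_left, triForm_smul_left, hd0, hd1, hd2,
              triForm_single_single, triForm_single_single, triForm_single_single]
            norm_num
          rw [hφ]; module
        obtain ⟨h3, h3G, h3e⟩ := plane_trans (p := p) (N := n+2) (by omega) (a+1) 1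
          (by rintro ⟨-, hc⟩; exact one_ne_zero hc)
        have h3e' : h3 ((a + 1) • d0 + d1) = d0 := by
          have : (a + 1) • d0 + (1 : ZMod p) • d1 = (a + 1) • d0 + d1 := by module
          rw [← this]
          exact h3e
        refine ⟨h3 * tv p d2 1 * tv p d1 (-a⁻¹) * E,
          mul_mem (mul_mem (mul_mem h3G (by rw [hd2]; exact tv_single_mem _ _))
            (by rw [hd1]; exact tv_single_mem _ _)) hEG, ?_⟩
        show h3 (tv p d2 1 (tv p d1 (-a⁻¹) (E v))) = d0
        rw [hEv, hstep1, hstep2, h3e']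
    · -- b ≠ 0 : kill the d2 coordinate directly
      have hstep : tv p d2 b⁻¹ ((a + 1) • d0 + b • d1 + d2) = (a + 1) • d0 + b • d1 := by
        rw [tv_apply]
        have hφ : triForm p (n+2) ((a + 1) • d0 + b • d1 + d2) d2 = b := by
          rw [triForm_add_left, triForm_add_left, triForm_smul_left, triForm_smul_left,
            hd0, hd1, hd2, triForm_single_single, triForm_single_single,
            triForm_single_single]
          norm_num
        rw [hφ, inv_mul_cancel₀ hbz]
        module
      obtain ⟨h3, h3G, h3e⟩ := plane_trans (p := p) (N := n+2) (by omega) (a+1) b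
        (by rintro ⟨-, hc⟩; exact hbz hc)
      refine ⟨h3 * tv p d2 b⁻¹ * E,
        mul_mem (mul_mem h3G (by rw [hd2]; exact tv_single_mem _ _)) hEG, ?_⟩
      show h3 (tv p d2 b⁻¹ (E v)) = d0
      rw [hEv, hstep]
      exact h3e

end TGS
namespace TGS

variable {p n : ℕ}

/-- **Claim B**: transitivity of the stabilizer of `e₀`. -/
lemma claimB [Fact p.Prime] (hp2 : p ≠ 2) (hn2 : 2 ≤ n) (hneven : Even n)
    (IH : Gp p n = sp p n) {w : Fin (n+2) → ZMod p} (hw : w ⟨1, by omega⟩ = (1 : ZMod p)) :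
    ∃ h ∈ Gp p (n+2),
      h (Pi.single (⟨0, by omega⟩ : Fin (n+2)) (1 : ZMod p)) =
        Pi.single (⟨0, by omega⟩ : Fin (n+2)) (1 : ZMod p)
      ∧ h w = Pi.single (⟨1, by omega⟩ : Fin (n+2)) (1 : ZMod p) := by
  haveI : NeZero p := neZero_of_prime
  have hn0 : 0 < n := by omega
  set d0 : Fin (n+2) → ZMod p := Pi.single (⟨0, by omega⟩ : Fin (n+2)) (1 : ZMod p) with hd0
  set d1 : Fin (n+2) → ZMod p := Pi.single (⟨1, by omega⟩ : Fin (n+2)) (1 : ZMod p) with hd1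
  set d2 : Fin (n+2) → ZMod p := Pi.single (⟨2, by omega⟩ : Fin (n+2)) (1 : ZMod p) with hd2
  set f0 : Fin n → ZMod p := Pi.single (⟨0, hn0⟩ : Fin n) (1 : ZMod p) with hf0
  set u := projV w with hu_def
  set a := w ⟨0, by omega⟩ - w ⟨2, by omega⟩ with ha
  have hvdec : w = a • d0 + d1 + emb u := by
    have := vec_decomp hn0 w
    rw [hw, one_smul] at this
    exact this
  -- transvections along d0 and d2 fix d0
  have hfix0 : ∀ l, tv p d0 l d0 = d0 := by
    intro l
    rw [tv_apply, triForm_self]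
    module
  have hfix2 : ∀ l, tv p d2 l d0 = d0 := by
    intro l
    rw [tv_apply]
    have hφ : triForm p (n+2) d0 d2 = 0 := by
      rw [hd0, hd2, triForm_single_single]; norm_num
    rw [hφ]
    module
  by_cases hu : u = 0
  · -- plane case : w = a • d0 + d1
    have hvrep : w = a • d0 + d1 := by
      rw [hvdec, hu, emb_zero, add_zero]
    refine ⟨tv p d0 (-a), by rw [hd0]; exact tv_single_mem _ _, hfix0 _, ?_⟩
    rw [hvrep, tv_apply]
    have hφ : triForm p (n+2) (a • d0 + d1) d0 = -1 := by
      rw [triForm_add_left, triForm_smul_left, hd0, hd1, triForm_single_single,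
        triForm_single_single]
      norm_num
    rw [hφ]
    module
  · obtain ⟨s, hssp, hsu⟩ := sp_trans hneven hu (single_one_ne_zero (p := p) (⟨0, hn0⟩ : Fin n))
    have hsG : s ∈ Gp p n := by rw [IH]; exact hssp
    set E := extEquiv hn0 s with hE
    have hEG : E ∈ Gp p (n+2) := extEquiv_maps_Gp hp2 hn2 hsG
    have hEfix : E d0 = d0 := by
      rw [hE, hd0]
      exact extEquiv_d0 hn0 s
    have hEw : E w = (a + 1) • d0 + d1 + d2 := by
      rw [hE, extEquiv_apply, ← hu_def, hsu, emb_single_zero hn0]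
      rw [show w ⟨0, by omega⟩ - w ⟨2, by omega⟩ = a from rfl, hw, ← hd0, ← hd1, ← hd2]
      module
    have hstep1 : tv p d2 1 ((a + 1) • d0 + d1 + d2) = (a + 1) • d0 + d1 := by
      rw [tv_apply]
      have hφ : triForm p (n+2) ((a + 1) • d0 + d1 + d2) d2 = 1 := by
        rw [triForm_add_left, triForm_add_left, triForm_smul_left, hd0, hd1, hd2,
          triForm_single_single, triForm_single_single, triForm_single_single]
        norm_num
      rw [hφ]
      module
    have hstep2 : tv p d0 (-(a+1)) ((a + 1) • d0 + d1) = d1 := by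
      rw [tv_apply]
      have hφ : triForm p (n+2) ((a + 1) • d0 + d1) d0 = -1 := by
        rw [triForm_add_left, triForm_smul_left, hd0, hd1, triForm_single_single,
          triForm_single_single]
        norm_num
      rw [hφ]
      module
    refine ⟨tv p d0 (-(a+1)) * tv p d2 1 * E,
      mul_mem (mul_mem (by rw [hd0]; exact tv_single_mem _ _)
        (by rw [hd2]; exact tv_single_mem _ _)) hEG, ?_, ?_⟩
    · show tv p d0 (-(a+1)) (tv p d2 1 (E d0)) = d0
      rw [hEfix, hfix2, hfix0]
    · show tv p d0 (-(a+1)) (tv p d2 1 (E w)) = d1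
      rw [hEw, hstep1, hstep2]

end TGS
namespace TGS

variable {p n : ℕ}

lemma step_lemma [Fact p.Prime] (hp2 : p ≠ 2) (hn2 : 2 ≤ n) (hneven : Even n)
    (IH : Gp p n = sp p n) : Gp p (n+2) = sp p (n+2) := by
  apply le_antisymm Gp_le_sp
  intro g hg
  haveI : NeZero p := neZero_of_prime
  have hn0 : 0 < n := by omega
  set d0 : Fin (n+2) → ZMod p := Pi.single (⟨0, by omega⟩ : Fin (n+2)) (1 : ZMod p) with hd0
  set d1 : Fin (n+2) → ZMod p := Pi.single (⟨1, by omega⟩ : Fin (n+2)) (1 : ZMod p) with hd1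
  -- step 1 : move g d0 back to d0
  have hgd0ne : g d0 ≠ 0 := by
    intro h
    have h2 : d0 = 0 := g.map_eq_zero_iff.mp h
    exact single_one_ne_zero (p := p) (⟨0, by omega⟩ : Fin (n+2)) h2
  obtain ⟨h1, h1G, h1e⟩ := claimA hp2 hn2 hneven IH hgd0ne
  set g1 := h1 * g with hg1
  have hg1sp : g1 ∈ sp p (n+2) := mul_mem (Gp_le_sp h1G) hg
  have hg1d0 : g1 d0 = d0 := by
    show h1 (g d0) = d0
    exact h1e
  -- step 2 : fix up g1 d1
  have hw1 : (g1 d1) ⟨1, by omega⟩ = 1 := by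
    have h2 : triForm p (n+2) (g1 d0) (g1 d1) = 1 := by
      rw [hg1sp d0 d1, hd0, hd1, triForm_single_single]
      norm_num
    rw [hg1d0, hd0, phi_d0_right hn0] at h2
    exact h2
  obtain ⟨h2, h2G, h2fix, h2e⟩ := claimB hp2 hn2 hneven IH hw1
  set g2 := h2 * g1 with hg2
  have hg2sp : g2 ∈ sp p (n+2) := mul_mem (Gp_le_sp h2G) hg1sp
  have hg2d0 : g2 d0 = d0 := by
    show h2 (g1 d0) = d0
    rw [hg1d0]
    exact h2fix
  have hg2d1 : g2 d1 = d1 := by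
    show h2 (g1 d1) = d1
    exact h2e
  have hg2s0 : g2.symm d0 = d0 := by
    nth_rewrite 1 [← hg2d0]
    exact g2.symm_apply_apply d0
  have hg2s1 : g2.symm d1 = d1 := by
    nth_rewrite 1 [← hg2d1]
    exact g2.symm_apply_apply d1
  have hg2ssp : ∀ a b, triForm p (n+2) (g2.symm a) (g2.symm b) = triForm p (n+2) a b := by
    intro a b
    rw [← hg2sp (g2.symm a) (g2.symm b), g2.apply_symm_apply, g2.apply_symm_apply]
  -- the perp part is stable under isometries fixing d0 and d1
  have hstab : ∀ (g' : (Fin (n+2) → ZMod p) ≃ₗ[ZMod p] (Fin (n+2) → ZMod p)),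
      (∀ a b, triForm p (n+2) (g' a) (g' b) = triForm p (n+2) a b) →
      g' d0 = d0 → g' d1 = d1 →
      ∀ z : Fin n → ZMod p, emb (projV (g' (emb z))) = g' (emb z) := by
    intro g' hsp hf0 hf1 z
    have hx1 : (g' (emb z)) ⟨1, by omega⟩ = 0 := by
      have h3 := hsp d0 (emb z)
      rw [hf0, hd0, phi_d0_right hn0, phi_d0_right hn0, emb_apply_one _ _ (by simp)] at h3
      exact h3
    have hx02 : (g' (emb z)) ⟨2, by omega⟩ - (g' (emb z)) ⟨0, by omega⟩ = 0 := by
      have h3 := hsp d1 (emb z)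
      rw [hf1, hd1, phi_d1_right hn0, phi_d1_right hn0] at h3
      rw [h3]
      rw [emb_apply_zero hn0 z (⟨0, by omega⟩ : Fin (n+2)) (by simp),
        emb_apply_ge z (⟨2, by omega⟩ : Fin (n+2)) (by simp)]
      have h4 : z ⟨((⟨2, by omega⟩ : Fin (n+2)) : ℕ) - 2, by simp only [Fin.val_mk]; omega⟩
          = z ⟨0, hn0⟩ := congrArg z (Fin.ext (by simp))
      rw [h4, sub_self]
    have hdec := vec_decomp hn0 (g' (emb z))
    have h02 : (g' (emb z)) ⟨0, by omega⟩ - (g' (emb z)) ⟨2, by omega⟩ = 0 := by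
      rw [← neg_sub, hx02, neg_zero]
    rw [h02, hx1, zero_smul, zero_smul, zero_add, zero_add] at hdec
    exact hdec.symm
  -- the restriction of g2 to the perp part
  set sbar : (Fin n → ZMod p) ≃ₗ[ZMod p] (Fin n → ZMod p) :=
    { toFun := fun x => projV (g2 (emb x))
      map_add' := by
        intro x y
        rw [emb_add, map_add, projV_add]
      map_smul' := by
        intro c x
        simp only [RingHom.id_apply]
        rw [emb_smul, map_smul, projV_smul]
      invFun := fun x => projV (g2.symm (emb x))
      left_inv := by
        intro x
        dsimp only
        rw [hstab g2 hg2sp hg2d0 hg2d1 x, g2.symm_apply_apply, projV_emb]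
      right_inv := by
        intro x
        dsimp only
        rw [hstab g2.symm hg2ssp hg2s0 hg2s1 x, g2.apply_symm_apply, projV_emb] }
    with hsbar
  have hsbar_sp : sbar ∈ sp p n := by
    intro x y
    show triForm p n (projV (g2 (emb x))) (projV (g2 (emb y))) = _
    rw [← triForm_emb (p := p) (projV (g2 (emb x))) (projV (g2 (emb y))),
      hstab g2 hg2sp hg2d0 hg2d1, hstab g2 hg2sp hg2d0 hg2d1,
      hg2sp (emb x) (emb y), triForm_emb]
  have hsbarG : sbar ∈ Gp p n := by rw [IH]; exact hsbar_sp
  have hext : extEquiv hn0 sbar = g2 := by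
    apply LinearEquiv.ext
    intro v
    rw [extEquiv_apply]
    have hsv : sbar (projV v) = projV (g2 (emb (projV v))) := rfl
    rw [hsv, hstab g2 hg2sp hg2d0 hg2d1]
    conv_rhs => rw [vec_decomp hn0 v]
    rw [map_add, map_add, map_smul, map_smul, hg2d0, hg2d1]
  have hg2G : g2 ∈ Gp p (n+2) := by
    rw [← hext]
    exact extEquiv_maps_Gp hp2 hn2 hsbarG
  have hgeq : g = h1⁻¹ * (h2⁻¹ * g2) := by
    rw [hg2, hg1]
    group
  rw [hgeq]
  exact mul_mem (inv_mem h1G) (mul_mem (inv_mem h2G) hg2G)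

end TGS

namespace TGS

lemma Gp_eq_sp {p : ℕ} [Fact p.Prime] (hp2 : p ≠ 2) :
    ∀ N : ℕ, Even N → 2 ≤ N → Gp p N = sp p N := by
  intro N
  induction N using Nat.strong_induction_on with
  | _ N ih =>
    intro hE h2
    rcases Nat.lt_or_ge N 4 with h4 | h4
    · obtain ⟨k, hk⟩ := hE
      have hN2 : N = 2 := by omega
      subst hN2
      exact base_case
    · obtain ⟨n, rfl⟩ : ∃ n, N = n + 2 := ⟨N - 2, by omega⟩
      have hneven : Even n := by
        obtain ⟨k, hk⟩ := hE
        exact ⟨k - 1, by omega⟩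
      exact step_lemma hp2 (by omega) hneven (ih n (by omega) hneven (by omega))

end TGS

/-- **Assion for `p = 3`, Wajnryb for odd `p`.** Let `p` be an odd prime
and `m ≥ 1`.  The subgroup of the group of linear automorphisms of `(ZMod p)^{2m}`
generated by the `2m` braid-like transvections `τ_i (a) = a - φ_{2m}(a, e_i) • e_i`
(`1 ≤ i ≤ 2m`) is exactly the full group of isometries of `φ_{2m}`, i.e. the symplectic
group. -/
theorem transvections_generate_symplectic_group (p m : ℕ) (hp : p.Prime) (hp2 : p ≠ 2)
    (hm : 1 ≤ m) :
    (Subgroup.closure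
        {g : (Fin (2*m) → ZMod p) ≃ₗ[ZMod p] (Fin (2*m) → ZMod p) |
          ∃ i : Fin (2*m), ∀ a : Fin (2*m) → ZMod p,
            g a = a - triForm p (2*m) a (Pi.single i (1 : ZMod p))
              • (Pi.single i (1 : ZMod p) : Fin (2*m) → ZMod p)}
      : Set ((Fin (2*m) → ZMod p) ≃ₗ[ZMod p] (Fin (2*m) → ZMod p)))
      = {g : (Fin (2*m) → ZMod p) ≃ₗ[ZMod p] (Fin (2*m) → ZMod p) |
          ∀ a b : Fin (2*m) → ZMod p,
            triForm p (2*m) (g a) (g b) = triForm p (2*m) a b} := by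
  haveI : Fact p.Prime := ⟨hp⟩
  have h := TGS.Gp_eq_sp (p := p) hp2 (2 * m) ⟨m, two_mul m⟩ (by omega)
  calc (↑(Subgroup.closure
        {g : (Fin (2*m) → ZMod p) ≃ₗ[ZMod p] (Fin (2*m) → ZMod p) |
          ∃ i : Fin (2*m), ∀ a : Fin (2*m) → ZMod p,
            g a = a - triForm p (2*m) a (Pi.single i (1 : ZMod p))
              • (Pi.single i (1 : ZMod p) : Fin (2*m) → ZMod p)})
      : Set ((Fin (2*m) → ZMod p) ≃ₗ[ZMod p] (Fin (2*m) → ZMod p)))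
      = ↑(TGS.Gp p (2*m)) := rfl
    _ = ↑(TGS.sp p (2*m)) := by rw [h]
    _ = {g : (Fin (2*m) → ZMod p) ≃ₗ[ZMod p] (Fin (2*m) → ZMod p) |
          ∀ a b : Fin (2*m) → ZMod p,
            triForm p (2*m) (g a) (g b) = triForm p (2*m) a b} := rfl
end

section
/- Let V be a finite-dimensional vector space over ZMod 3 and let W₁, W₂, W₃, W₄ be subspaces of V such that: (i) all pairwise intersections coincide, i.e. W_i ∩ W_j = F for all i ≠ j, where F := W₁ ∩ W₂; (ii) F has codimension at most 1 in each W_i (dim W_i ≤ dim F + 1 for each i); and (iii) W₁ ∪ W₂ ∪ W₃ ∪ W₄ = V. Then either all four cardinalities |W₁|, |W₂|, |W₃|, |W₄| are equal, or three of them are equal to a common value c and the fourth equals 3c. -/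
private lemma pow_three_ne (k c : ℕ) (hc : c = 5 ∨ c = 7) : (3:ℕ) ^ k ≠ c := by
  cases k with
  | zero => simp; omega
  | succ n =>
    intro h
    have : (3:ℕ) ∣ c := h ▸ dvd_pow_self 3 n.succ_ne_zero
    omega

/-- Let `V` be a finite-dimensional vector space over `ZMod 3` and let
`W₁, W₂, W₃, W₄` be subspaces such that: all pairwise intersections coincide with a common
subspace `F`, `F` has codimension at most one in each `Wᵢ`, and the union of the `Wᵢ` is
all of `V`.  Then either all four cardinalities `|Wᵢ|` are equal, or three of them are
equal to a common value `c` and the fourth equals `3c`. -/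
theorem four_subspaces_card (V : Type*) [AddCommGroup V] [Module (ZMod 3) V]
    [FiniteDimensional (ZMod 3) V]
    (W : Fin 4 → Submodule (ZMod 3) V) (F : Submodule (ZMod 3) V)
    (hinter : ∀ i j : Fin 4, i ≠ j → W i ⊓ W j = F)
    (hcodim : ∀ i : Fin 4, Module.finrank (ZMod 3) (W i) ≤ Module.finrank (ZMod 3) F + 1)
    (hunion : (↑(W 0) ∪ ↑(W 1) ∪ ↑(W 2) ∪ ↑(W 3) : Set V) = Set.univ) :
    (∀ i j : Fin 4, Nat.card (W i) = Nat.card (W j)) ∨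
    (∃ (i : Fin 4) (c : ℕ), (∀ j : Fin 4, j ≠ i → Nat.card (W j) = c) ∧
      Nat.card (W i) = 3 * c) := by
  classical
  have hfinV : Finite V := Module.finite_of_finite (ZMod 3)
  have : Fintype V := Fintype.ofFinite V
  -- F is contained in each W i
  have hF : ∀ i : Fin 4, F ≤ W i := by
    intro i
    have hne : i ≠ i + 1 := by
      simp only [Fin.ne_iff_vne, Fin.val_add]
      omega
    rw [← hinter i (i+1) hne]
    exact inf_le_left
  set f : ℕ := Nat.card F with hf
  -- cardinality of a submodule is 3 ^ finrank
  have hcard : ∀ S : Submodule (ZMod 3) V,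
      Nat.card S = 3 ^ Module.finrank (ZMod 3) S := by
    intro S
    rw [Nat.card_eq_fintype_card, Module.card_eq_pow_finrank (K := ZMod 3), ZMod.card]
  have hfpos : 0 < f := by
    rw [hf, hcard]; positivity
  -- each W i is either F or has cardinality 3 * f
  have hdich : ∀ i : Fin 4, W i = F ∨ Nat.card (W i) = 3 * f := by
    intro i
    have h1 : Module.finrank (ZMod 3) F ≤ Module.finrank (ZMod 3) (W i) :=
      Submodule.finrank_mono (hF i)
    rcases Nat.lt_or_ge (Module.finrank (ZMod 3) (W i))
        (Module.finrank (ZMod 3) F + 1) with h | h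
    · left
      exact (Submodule.eq_of_le_of_finrank_le (hF i) (by omega)).symm
    · right
      have h2 : Module.finrank (ZMod 3) (W i) = Module.finrank (ZMod 3) F + 1 := by
        have := hcodim i; omega
      rw [hcard, h2, pow_succ, hf, hcard]
      ring
  -- counting: Nat.card V + 3 * f = ∑ card (W i)
  set A : Fin 4 → Finset V := fun i => (W i : Set V).toFinset with hA
  have hAcard : ∀ i, (A i).card = Nat.card (W i) := by
    intro i
    rw [hA, Set.toFinset_card, Nat.card_eq_fintype_card]
    rfl
  have hAF : ∀ i j : Fin 4, i ≠ j → A i ∩ A j = (F : Set V).toFinset := by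
    intro i j hij
    rw [hA, ← Set.toFinset_inter, ← hinter i j hij]
    simp
  have hFcard : (F : Set V).toFinset.card = f := by
    rw [Set.toFinset_card, hf, Nat.card_eq_fintype_card]
    rfl
  have hU : A 0 ∪ A 1 ∪ A 2 ∪ A 3 = Finset.univ := by
    ext x
    have hx : x ∈ (↑(W 0) ∪ ↑(W 1) ∪ ↑(W 2) ∪ ↑(W 3) : Set V) :=
      hunion ▸ Set.mem_univ x
    simp only [hA, Finset.mem_union, Set.mem_toFinset, Finset.mem_univ, iff_true]
    simpa using hx
  have e1 : (A 0 ∪ A 1).card + f = (A 0).card + (A 1).card := by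
    rw [← Finset.card_union_add_card_inter, hAF 0 1 (by decide), hFcard]
  have i2 : (A 0 ∪ A 1) ∩ A 2 = (F : Set V).toFinset := by
    rw [Finset.union_inter_distrib_right, hAF 0 2 (by decide), hAF 1 2 (by decide),
      Finset.union_self]
  have e2 : (A 0 ∪ A 1 ∪ A 2).card + f = (A 0 ∪ A 1).card + (A 2).card := by
    rw [← Finset.card_union_add_card_inter, i2, hFcard]
  have i3 : (A 0 ∪ A 1 ∪ A 2) ∩ A 3 = (F : Set V).toFinset := by
    rw [Finset.union_inter_distrib_right, Finset.union_inter_distrib_right,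
      hAF 0 3 (by decide), hAF 1 3 (by decide), hAF 2 3 (by decide),
      Finset.union_self, Finset.union_self]
  have e3 : (A 0 ∪ A 1 ∪ A 2 ∪ A 3).card + f = (A 0 ∪ A 1 ∪ A 2).card + (A 3).card := by
    rw [← Finset.card_union_add_card_inter, i3, hFcard]
  have hVcard : (A 0 ∪ A 1 ∪ A 2 ∪ A 3).card = Nat.card V := by
    rw [hU, Nat.card_eq_fintype_card, Finset.card_univ]
  have hsum : Nat.card V + 3 * f
      = Nat.card (W 0) + Nat.card (W 1) + Nat.card (W 2) + Nat.card (W 3) := by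
    rw [← hVcard, ← hAcard 0, ← hAcard 1, ← hAcard 2, ← hAcard 3]
    omega
  -- powers of three
  have hVpow : Nat.card V = 3 ^ Module.finrank (ZMod 3) V := by
    rw [Nat.card_eq_fintype_card, Module.card_eq_pow_finrank (K := ZMod 3), ZMod.card]
  have hfpow : f = 3 ^ Module.finrank (ZMod 3) F := hf ▸ hcard F
  have hle : Module.finrank (ZMod 3) F ≤ Module.finrank (ZMod 3) V :=
    Submodule.finrank_le F
  -- contradiction from Nat.card V = c * f, c ∈ {5,7}
  have hcontra : ∀ c : ℕ, c = 5 ∨ c = 7 → Nat.card V = c * f → False := by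
    intro c hc hV
    obtain ⟨k, hk⟩ := Nat.exists_eq_add_of_le hle
    rw [hVpow, hfpow, hk, pow_add] at hV
    have h3 : (3:ℕ) ^ k = c := by
      have h3pos : 0 < (3:ℕ) ^ Module.finrank (ZMod 3) F := by positivity
      have : 3 ^ Module.finrank (ZMod 3) F * 3 ^ k
          = 3 ^ Module.finrank (ZMod 3) F * c := by rw [hV]; ring
      exact Nat.eq_of_mul_eq_mul_left h3pos this
    exact pow_three_ne k c hc h3
  -- helper: card of F-equal submodule
  have hEq : ∀ i : Fin 4, W i = F → Nat.card (W i) = f := by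
    intro i h; rw [h]
  -- case analysis
  rcases hdich 0 with h0 | h0 <;> rcases hdich 1 with h1 | h1 <;>
    rcases hdich 2 with h2 | h2 <;> rcases hdich 3 with h3 | h3
  -- 0000: all equal f
  · left
    have key : ∀ i : Fin 4, Nat.card (W i) = f := by
      intro i; fin_cases i
      exacts [hEq 0 h0, hEq 1 h1, hEq 2 h2, hEq 3 h3]
    intro i j; rw [key i, key j]
  -- 0001: big is 3
  · right; exact ⟨3, f, fun j hj => by fin_cases j <;>
      first | exact hEq 0 h0 | exact hEq 1 h1 | exact hEq 2 h2 | simp at hj, h3⟩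
  -- 0010
  · right; exact ⟨2, f, fun j hj => by fin_cases j <;>
      first | exact hEq 0 h0 | exact hEq 1 h1 | exact hEq 3 h3 | simp at hj, h2⟩
  -- 0011: card V = 5f
  · exfalso
    apply hcontra 5 (Or.inl rfl)
    have := hEq 0 h0; have := hEq 1 h1
    omega
  -- 0100
  · right; exact ⟨1, f, fun j hj => by fin_cases j <;>
      first | exact hEq 0 h0 | exact hEq 2 h2 | exact hEq 3 h3 | simp at hj, h1⟩
  -- 0101
  · exfalso
    apply hcontra 5 (Or.inl rfl)
    have := hEq 0 h0; have := hEq 2 h2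
    omega
  -- 0110
  · exfalso
    apply hcontra 5 (Or.inl rfl)
    have := hEq 0 h0; have := hEq 3 h3
    omega
  -- 0111
  · exfalso
    apply hcontra 7 (Or.inr rfl)
    have := hEq 0 h0
    omega
  -- 1000
  · right; exact ⟨0, f, fun j hj => by fin_cases j <;>
      first | exact hEq 1 h1 | exact hEq 2 h2 | exact hEq 3 h3 | simp at hj, h0⟩
  -- 1001
  · exfalso
    apply hcontra 5 (Or.inl rfl)
    have := hEq 1 h1; have := hEq 2 h2
    omega
  -- 1010
  · exfalso
    apply hcontra 5 (Or.inl rfl)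
    have := hEq 1 h1; have := hEq 3 h3
    omega
  -- 1011
  · exfalso
    apply hcontra 7 (Or.inr rfl)
    have := hEq 1 h1
    omega
  -- 1100
  · exfalso
    apply hcontra 5 (Or.inl rfl)
    have := hEq 2 h2; have := hEq 3 h3
    omega
  -- 1101
  · exfalso
    apply hcontra 7 (Or.inr rfl)
    have := hEq 2 h2
    omega
  -- 1110
  · exfalso
    apply hcontra 7 (Or.inr rfl)
    have := hEq 3 h3
    omega
  -- 1111: all equal 3f
  · left
    have key : ∀ i : Fin 4, Nat.card (W i) = 3 * f := by
      intro i; fin_cases i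
      exacts [h0, h1, h2, h3]
    intro i j; rw [key i, key j]
end
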